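/- arXiv:1801.08693 — 14 statements merged into one kernel-verified Lean document; each statement's English description precedes it below -/
import Mathlib

section
/- Metaconverse for finite blocklength lossy source coding: Let S and Ŝ be nonempty finite sets, P_S a probability mass function on S, d : S × Ŝ → ℝ≥0 a distortion function, d₀ ≥ 0 a distortion level, and M a positive integer. Then for every encoder f : S → Fin M, every decoder g : Fin M → Ŝ, and every function φ : S → ℝ with 0 ≤ φ(s) ≤ P_S(s) for all s, the probability of excess distortion satisfies ∑_{s∈S} P_S(s)·𝟙{d(s, g(f(s))) > d₀} ≥ ∑_{s∈S} φ(s) − M · max_{ŝ∈Ŝ} ∑_{s∈S} φ(s)·𝟙{d(s,ŝ) ≤ d₀}. -/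
open Finset
open scoped Classical

theorem lossy_metaconverse
    {S Shat : Type*} [Fintype S] [Fintype Shat] [Nonempty S] [Nonempty Shat]
    (P : S → ℝ) (hP0 : ∀ s, 0 ≤ P s) (hP1 : ∑ s, P s = 1)
    (d : S → Shat → ℝ) (hd : ∀ s sh, 0 ≤ d s sh)
    (d₀ : ℝ) (hd₀ : 0 ≤ d₀)
    (M : ℕ) (hM : 0 < M)
    (f : S → Fin M) (g : Fin M → Shat)
    (φ : S → ℝ) (hφ0 : ∀ s, 0 ≤ φ s) (hφP : ∀ s, φ s ≤ P s) :
    ∑ s, P s * (if d₀ < d s (g (f s)) then (1:ℝ) else 0) ≥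
      (∑ s, φ s) -
        M * (univ.sup' univ_nonempty
          (fun sh => ∑ s, φ s * (if d s sh ≤ d₀ then (1:ℝ) else 0))) := by
  set A := univ.sup' univ_nonempty
      (fun sh => ∑ s, φ s * (if d s sh ≤ d₀ then (1:ℝ) else 0)) with hA
  have hsplit : (∑ s, φ s) =
      (∑ s, φ s * (if d₀ < d s (g (f s)) then (1:ℝ) else 0)) +
      (∑ s, φ s * (if d s (g (f s)) ≤ d₀ then (1:ℝ) else 0)) := by
    rw [← Finset.sum_add_distrib]
    refine Finset.sum_congr rfl fun s _ => ?_
    by_cases h : d₀ < d s (g (f s))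
    · simp [h, not_le.mpr h]
    · simp [h, not_lt.mp h]
  have h1 : (∑ s, φ s * (if d₀ < d s (g (f s)) then (1:ℝ) else 0)) ≤
      ∑ s, P s * (if d₀ < d s (g (f s)) then (1:ℝ) else 0) := by
    refine Finset.sum_le_sum fun s _ => ?_
    have : (0:ℝ) ≤ (if d₀ < d s (g (f s)) then (1:ℝ) else 0) := by positivity
    exact mul_le_mul_of_nonneg_right (hφP s) this
  have h2 : (∑ s, φ s * (if d s (g (f s)) ≤ d₀ then (1:ℝ) else 0)) ≤ M * A := by
    have hfib : (∑ s, φ s * (if d s (g (f s)) ≤ d₀ then (1:ℝ) else 0)) =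
        ∑ m : Fin M, ∑ s ∈ univ.filter (fun s => f s = m),
          φ s * (if d s (g (f s)) ≤ d₀ then (1:ℝ) else 0) := by
      rw [Finset.sum_fiberwise]
    rw [hfib]
    have hbound : ∀ m : Fin M,
        (∑ s ∈ univ.filter (fun s => f s = m),
          φ s * (if d s (g (f s)) ≤ d₀ then (1:ℝ) else 0)) ≤ A := by
      intro m
      have step : (∑ s ∈ univ.filter (fun s => f s = m),
          φ s * (if d s (g (f s)) ≤ d₀ then (1:ℝ) else 0)) ≤
          ∑ s, φ s * (if d s (g m) ≤ d₀ then (1:ℝ) else 0) := by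
        rw [show (∑ s ∈ univ.filter (fun s => f s = m),
            φ s * (if d s (g (f s)) ≤ d₀ then (1:ℝ) else 0)) =
            ∑ s ∈ univ.filter (fun s => f s = m),
            φ s * (if d s (g m) ≤ d₀ then (1:ℝ) else 0) from
          Finset.sum_congr rfl fun s hs => by
            rw [Finset.mem_filter] at hs; rw [hs.2]]
        refine Finset.sum_le_sum_of_subset_of_nonneg (Finset.filter_subset _ _)
          fun s _ _ => ?_
        have : (0:ℝ) ≤ (if d s (g m) ≤ d₀ then (1:ℝ) else 0) := by positivity
        exact mul_nonneg (hφ0 s) this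
      exact step.trans (Finset.le_sup' (fun sh => ∑ s, φ s * (if d s sh ≤ d₀ then (1:ℝ) else 0)) (Finset.mem_univ (g m)))
    calc (∑ m : Fin M, ∑ s ∈ univ.filter (fun s => f s = m),
            φ s * (if d s (g (f s)) ≤ d₀ then (1:ℝ) else 0))
        ≤ ∑ _m : Fin M, A := Finset.sum_le_sum fun m _ => hbound m
      _ = M * A := by simp [mul_comm]
  linarith
end

section
/- Entropy-density converse for lossless source coding: Let S be a nonempty finite set, P_S a probability mass function on S, M a positive integer, and γ ≥ 0 a real number. For every encoder f : S → Fin M and decoder g : Fin M → S, the error probability satisfies ∑_{s} P_S(s)·𝟙{g(f(s)) ≠ s} ≥ ∑_{s} P_S(s)·𝟙{P_S(s) ≤ exp(−γ)/M} − exp(−γ). Equivalently, the error probability is at least ℙ[−log P_S(S) ≥ log M + γ] − exp(−γ), where ℙ is the law of a random variable S with distribution P_S. -/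
open Finset
open scoped Classical

theorem lossless_entropy_density_converse
    {S : Type*} [Fintype S] [Nonempty S] [DecidableEq S]
    (P : S → ℝ) (hP0 : ∀ s, 0 ≤ P s) (hP1 : ∑ s, P s = 1)
    (M : ℕ) (hM : 0 < M)
    (γ : ℝ) (hγ : 0 ≤ γ)
    (f : S → Fin M) (g : Fin M → S) :
    ∑ s, P s * (if g (f s) ≠ s then (1:ℝ) else 0) ≥
      (∑ s, P s * (if P s ≤ Real.exp (-γ) / M then (1:ℝ) else 0)) - Real.exp (-γ) := by
  classical
  set ε := Real.exp (-γ) with hε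
  have hεpos : 0 < ε := Real.exp_pos _
  set A : Finset S := univ.filter (fun s => P s ≤ ε / M) with hA
  set E : Finset S := univ.filter (fun s => g (f s) ≠ s) with hE
  have hsumE : ∑ s, P s * (if g (f s) ≠ s then (1:ℝ) else 0) = ∑ s ∈ E, P s := by
    rw [hE, sum_filter]
    apply sum_congr rfl
    intro s _
    by_cases h : g (f s) ≠ s <;> simp [h]
  have hsumA : ∑ s, P s * (if P s ≤ ε / M then (1:ℝ) else 0) = ∑ s ∈ A, P s := by
    rw [hA, sum_filter]
    apply sum_congr rfl
    intro s _
    by_cases h : P s ≤ ε / M <;> simp [h]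
  rw [hsumE, hsumA, ge_iff_le, sub_le_iff_le_add]
  -- A ⊆ (A \ E) ∪ E
  have hsplit : ∑ s ∈ A, P s ≤ ∑ s ∈ A \ E, P s + ∑ s ∈ E, P s := by
    have := Finset.sum_le_sum_of_subset_of_nonneg (s := A) (t := (A \ E) ∪ E)
      (fun s hs => by
        by_cases h : s ∈ E
        · exact mem_union_right _ h
        · exact mem_union_left _ (mem_sdiff.mpr ⟨hs, h⟩))
      (fun s _ _ => hP0 s)
    calc ∑ s ∈ A, P s ≤ ∑ s ∈ (A \ E) ∪ E, P s := this
      _ = ∑ s ∈ A \ E, P s + ∑ s ∈ E, P s := Finset.sum_union sdiff_disjoint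
  have hcard : (A \ E).card ≤ M := by
    have hinj : Set.InjOn f (A \ E : Finset S) := by
      intro a ha b hb hfab
      have ha' := mem_sdiff.mp ha
      have hb' := mem_sdiff.mp hb
      have hga : g (f a) = a := by
        by_contra h; exact ha'.2 (mem_filter.mpr ⟨mem_univ _, h⟩)
      have hgb : g (f b) = b := by
        by_contra h; exact hb'.2 (mem_filter.mpr ⟨mem_univ _, h⟩)
      rw [← hga, ← hgb, hfab]
    calc (A \ E).card = ((A \ E).image f).card :=
          (Finset.card_image_of_injOn hinj).symm
      _ ≤ Fintype.card (Fin M) := Finset.card_le_card (Finset.subset_univ _)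
      _ = M := Fintype.card_fin M
  have hbound : ∑ s ∈ A \ E, P s ≤ ε := by
    have h1 : ∑ s ∈ A \ E, P s ≤ ∑ _s ∈ A \ E, (ε / M) := by
      apply Finset.sum_le_sum
      intro s hs
      exact (mem_filter.mp (mem_sdiff.mp hs).1).2
    have h2 : (∑ _s ∈ A \ E, (ε / M)) = (A \ E).card * (ε / M) := by
      simp [mul_comm]
    have h3 : ((A \ E).card : ℝ) * (ε / M) ≤ M * (ε / M) := by
      apply mul_le_mul_of_nonneg_right
      · exact_mod_cast hcard
      · positivity
    have h4 : (M : ℝ) * (ε / M) = ε := by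
      field_simp
    linarith
  linarith
end

section
/- Improved truncated converse for lossless source coding: Let S be a nonempty finite set, P_S a probability mass function on S, M a positive integer, and γ ≥ 0. For every encoder f : S → Fin M and decoder g : Fin M → S, the error probability satisfies ∑_{s} P_S(s)·𝟙{g(f(s)) ≠ s} ≥ ∑_{s∈S} min{P_S(s), exp(−γ)/M} − exp(−γ). (This bound dominates the standard bound ℙ[−log P_S(S) ≥ log M + γ] − exp(−γ).) -/
/-!
A decoder can reproduce at most `M` source symbols exactly, since the encoder is injective on the
set `A` of correctly decoded symbols. Hence for any `φ ≤ P_S` bounded by `c ≥ 0`, the mass of `φ`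
on `A` is at most `M c`, while on the complement of `A` it is at most the error probability.
Taking `φ = min (P_S, exp (-γ) / M)` gives the bound.
-/

open Finset
open scoped Classical

theorem card_filter_leftInverse_le_card {S β : Type*} [Fintype S] [Fintype β] [DecidableEq S]
    (f : S → β) (g : β → S) : #{s | g (f s) = s} ≤ Fintype.card β :=
  card_le_card_of_injOn f (fun _ _ => mem_univ _) <| Set.LeftInvOn.injOn fun s hs => by
    simpa using hs

theorem sum_sub_card_mul_le_sum_mul_ite_ne {S β : Type*} [Fintype S] [Fintype β] [DecidableEq S]
    (P φ : S → ℝ) (hφP : ∀ s, φ s ≤ P s) {c : ℝ} (hc : 0 ≤ c) (hφc : ∀ s, φ s ≤ c)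
    (f : S → β) (g : β → S) :
    ∑ s, φ s - Fintype.card β * c ≤ ∑ s, P s * (if g (f s) ≠ s then (1:ℝ) else 0) := by
  have hcorrect : ∑ s with g (f s) = s, φ s ≤ Fintype.card β * c :=
    calc ∑ s with g (f s) = s, φ s ≤ #{s | g (f s) = s} * c := by
          simpa using sum_le_sum fun s (_ : s ∈ ({s | g (f s) = s} : Finset S)) => hφc s
      _ ≤ Fintype.card β * c := by
          gcongr; exact_mod_cast card_filter_leftInverse_le_card f g
  have herror : ∑ s with g (f s) ≠ s, φ s ≤ ∑ s, P s * (if g (f s) ≠ s then (1:ℝ) else 0) := by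
    simp only [mul_ite, mul_one, mul_zero, ← sum_filter]
    exact sum_le_sum fun s _ => hφP s
  have hsplit := sum_filter_add_sum_filter_not univ (fun s => g (f s) = s) φ
  linarith

theorem lossless_truncated_converse_general
    {S : Type*} [Fintype S] [DecidableEq S]
    (P : S → ℝ)
    (M : ℕ)
    (γ : ℝ)
    (f : S → Fin M) (g : Fin M → S) :
    ∑ s, P s * (if g (f s) ≠ s then (1:ℝ) else 0) ≥
      (∑ s, min (P s) (Real.exp (-γ) / M)) - Real.exp (-γ) := by
  set c := Real.exp (-γ) / M
  have hMc : M * c ≤ Real.exp (-γ) := by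
    rw [mul_div_left_comm]
    exact mul_le_of_le_one_right (Real.exp_pos _).le (div_self_le_one _)
  have hconverse := sum_sub_card_mul_le_sum_mul_ite_ne P (fun s => min (P s) c)
    (fun _ => min_le_left _ _) (by positivity) (fun _ => min_le_right _ _) f g
  rw [Fintype.card_fin] at hconverse
  linarith

theorem lossless_truncated_converse
    {S : Type*} [Fintype S] [Nonempty S] [DecidableEq S]
    (P : S → ℝ) (hP0 : ∀ s, 0 ≤ P s) (hP1 : ∑ s, P s = 1)
    (M : ℕ) (hM : 0 < M)
    (γ : ℝ) (hγ : 0 ≤ γ)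
    (f : S → Fin M) (g : Fin M → S) :
    ∑ s, P s * (if g (f s) ≠ s then (1:ℝ) else 0) ≥
      (∑ s, min (P s) (Real.exp (-γ) / M)) - Real.exp (-γ) :=
  lossless_truncated_converse_general P M γ f g
end

section
/- Hypothesis-testing converse for lossy source coding: Let S, Ŝ be nonempty finite sets, P_S a probability mass function on S, d : S × Ŝ → ℝ≥0, d₀ ≥ 0, and M a positive integer. For every encoder f : S → Fin M, decoder g : Fin M → Ŝ, every probability mass function Q on S, and every real β ≥ 0, the excess-distortion probability satisfies ∑_{s} P_S(s)·𝟙{d(s,g(f(s))) > d₀} ≥ ∑_{s∈S} min{P_S(s), β·Q(s)} − β · M · max_{ŝ∈Ŝ} ∑_{s∈S} Q(s)·𝟙{d(s,ŝ) ≤ d₀}. -/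
open Finset
open scoped Classical

theorem lossy_hypothesis_testing_converse
    {S Shat : Type*} [Fintype S] [Fintype Shat] [Nonempty S] [Nonempty Shat]
    (P : S → ℝ) (hP0 : ∀ s, 0 ≤ P s) (hP1 : ∑ s, P s = 1)
    (d : S → Shat → ℝ) (hd : ∀ s sh, 0 ≤ d s sh)
    (d₀ : ℝ) (hd₀ : 0 ≤ d₀)
    (M : ℕ) (hM : 0 < M)
    (f : S → Fin M) (g : Fin M → Shat)
    (Q : S → ℝ) (hQ0 : ∀ s, 0 ≤ Q s) (hQ1 : ∑ s, Q s = 1)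
    (β : ℝ) (hβ : 0 ≤ β) :
    ∑ s, P s * (if d₀ < d s (g (f s)) then (1:ℝ) else 0) ≥
      (∑ s, min (P s) (β * Q s)) -
        β * M * (univ.sup' univ_nonempty
          (fun sh => ∑ s, Q s * (if d s sh ≤ d₀ then (1:ℝ) else 0))) := by
  set B : Shat → ℝ := fun sh => ∑ s, Q s * (if d s sh ≤ d₀ then (1:ℝ) else 0) with hB
  set V : ℝ := univ.sup' univ_nonempty B with hV
  set F : Finset S := univ.filter (fun s => d₀ < d s (g (f s))) with hF
  have hLHS : ∑ s, P s * (if d₀ < d s (g (f s)) then (1:ℝ) else 0) = ∑ s ∈ F, P s := by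
    rw [hF, Finset.sum_filter]
    exact Finset.sum_congr rfl (fun s _ => by split <;> simp
    )
  rw [hLHS]
  -- split min sum
  have hsplit : ∑ s, min (P s) (β * Q s)
      = ∑ s ∈ F, min (P s) (β * Q s) + ∑ s ∈ Fᶜ, min (P s) (β * Q s) := by
    rw [Finset.sum_add_sum_compl]
  have h1 : ∑ s ∈ F, min (P s) (β * Q s) ≤ ∑ s ∈ F, P s :=
    Finset.sum_le_sum fun s _ => min_le_left _ _
  have h2 : ∑ s ∈ Fᶜ, min (P s) (β * Q s) ≤ β * ∑ s ∈ Fᶜ, Q s := by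
    rw [Finset.mul_sum]
    exact Finset.sum_le_sum fun s _ => min_le_right _ _
  -- fiber bound
  have hfiber : ∑ s ∈ Fᶜ, Q s ≤ ∑ m : Fin M, B (g m) := by
    have : ∑ s ∈ Fᶜ, Q s = ∑ m : Fin M, ∑ s ∈ Fᶜ.filter (fun s => f s = m), Q s := by
      rw [← Finset.sum_fiberwise Fᶜ f Q]
    rw [this]
    refine Finset.sum_le_sum fun m _ => ?_
    have : B (g m) = ∑ s ∈ univ.filter (fun s => d s (g m) ≤ d₀), Q s := by
      rw [hB]
      rw [Finset.sum_filter]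
      exact Finset.sum_congr rfl (fun s _ => by split <;> simp)
    rw [this]
    refine Finset.sum_le_sum_of_subset_of_nonneg ?_ (fun s _ _ => hQ0 s)
    intro s hs
    simp only [Finset.mem_filter, Finset.mem_compl, hF, Finset.mem_univ, true_and,
      not_lt] at hs ⊢
    rcases hs with ⟨hsd, hfm⟩
    rw [← hfm]
    simpa using hsd
  have hsupb : ∑ m : Fin M, B (g m) ≤ M * V := by
    calc ∑ m : Fin M, B (g m) ≤ ∑ _m : Fin M, V :=
          Finset.sum_le_sum fun m _ => Finset.le_sup' B (Finset.mem_univ (g m))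
      _ = M * V := by simp [mul_comm]
  have hVnn : 0 ≤ ∑ s ∈ F, P s := Finset.sum_nonneg fun s _ => hP0 s
  have : ∑ s, min (P s) (β * Q s) ≤ ∑ s ∈ F, P s + β * (M * V) := by
    rw [hsplit]
    have : β * ∑ s ∈ Fᶜ, Q s ≤ β * (M * V) :=
      mul_le_mul_of_nonneg_left (le_trans hfiber hsupb) hβ
    linarith
  have := this
  rw [ge_iff_le, mul_assoc]
  linarith
end

section
/- Neyman–Pearson threshold optimality identity: Let S be a nonempty finite set, P and Q probability mass functions on S, θ ∈ ℝ, and γ* ≥ 0 a real number such that ∑_{s∈S} Q(s)·𝟙{P(s) ≤ γ*·Q(s)} = 1 − θ. Then (i) ∑_{s∈S} P(s)·𝟙{P(s) ≤ γ*·Q(s)} = ∑_{s∈S} min{P(s), γ*·Q(s)} − γ*·θ, and (ii) for every β ≥ 0, ∑_{s∈S} min{P(s), β·Q(s)} − β·θ ≤ ∑_{s∈S} min{P(s), γ*·Q(s)} − γ*·θ; consequently the supremum over β ≥ 0 of ∑_s min{P(s), β·Q(s)} − β·θ is attained at β = γ* and equals the type-I error ∑_s P(s)·𝟙{P(s) ≤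 γ*·Q(s)} of the Neyman–Pearson threshold test. -/
open Finset
open scoped Classical

theorem neyman_pearson_threshold_identity
    {S : Type*} [Fintype S] [Nonempty S]
    (P Q : S → ℝ) (hP0 : ∀ s, 0 ≤ P s) (hP1 : ∑ s, P s = 1)
    (hQ0 : ∀ s, 0 ≤ Q s) (hQ1 : ∑ s, Q s = 1)
    (θ : ℝ) (γstar : ℝ) (hγ : 0 ≤ γstar)
    (hNP : ∑ s, Q s * (if P s ≤ γstar * Q s then (1:ℝ) else 0) = 1 - θ) :
    (∑ s, P s * (if P s ≤ γstar * Q s then (1:ℝ) else 0)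
        = (∑ s, min (P s) (γstar * Q s)) - γstar * θ) ∧
    (∀ β : ℝ, 0 ≤ β →
      (∑ s, min (P s) (β * Q s)) - β * θ ≤
        (∑ s, min (P s) (γstar * Q s)) - γstar * θ) := by
  have hθ : ∑ s, Q s * (if P s ≤ γstar * Q s then (0:ℝ) else 1) = θ := by
    have : ∑ s, (Q s * (if P s ≤ γstar * Q s then (1:ℝ) else 0)
        + Q s * (if P s ≤ γstar * Q s then (0:ℝ) else 1)) = ∑ s, Q s := by
      apply Finset.sum_congr rfl
      intro s _
      by_cases h : P s ≤ γstar * Q s <;> simp [h]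
    rw [Finset.sum_add_distrib, hNP, hQ1] at this
    linarith
  have key : ∀ s, min (P s) (γstar * Q s)
      = P s * (if P s ≤ γstar * Q s then (1:ℝ) else 0)
        + γstar * (Q s * (if P s ≤ γstar * Q s then (0:ℝ) else 1)) := by
    intro s
    by_cases h : P s ≤ γstar * Q s
    · simp [h, min_eq_left h]
    · push_neg at h
      simp [not_le.mpr h, min_eq_right h.le]
  have hsum : ∑ s, min (P s) (γstar * Q s)
      = (∑ s, P s * (if P s ≤ γstar * Q s then (1:ℝ) else 0)) + γstar * θ := by
    calc ∑ s, min (P s) (γstar * Q s)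
        = ∑ s, (P s * (if P s ≤ γstar * Q s then (1:ℝ) else 0)
            + γstar * (Q s * (if P s ≤ γstar * Q s then (0:ℝ) else 1))) :=
          Finset.sum_congr rfl fun s _ => key s
      _ = (∑ s, P s * (if P s ≤ γstar * Q s then (1:ℝ) else 0))
            + γstar * ∑ s, Q s * (if P s ≤ γstar * Q s then (0:ℝ) else 1) := by
          rw [Finset.sum_add_distrib, Finset.mul_sum]
      _ = _ := by rw [hθ]
  constructor
  · linarith
  · intro β hβ
    have hpt : ∀ s, min (P s) (β * Q s)
        ≤ min (P s) (γstar * Q s)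
          + (β - γstar) * (Q s * (if P s ≤ γstar * Q s then (0:ℝ) else 1)) := by
      intro s
      by_cases h : P s ≤ γstar * Q s
      · simpa [h, min_eq_left h] using min_le_left (P s) (β * Q s)
      · push_neg at h
        rw [min_eq_right h.le, if_neg (not_le.mpr h)]
        have h2 : min (P s) (β * Q s) ≤ β * Q s := min_le_right _ _
        nlinarith
    have hsum2 : ∑ s, min (P s) (β * Q s)
        ≤ (∑ s, min (P s) (γstar * Q s)) + (β - γstar) * θ := by
      calc ∑ s, min (P s) (β * Q s)
          ≤ ∑ s, (min (P s) (γstar * Q s)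
              + (β - γstar) * (Q s * (if P s ≤ γstar * Q s then (0:ℝ) else 1))) :=
            Finset.sum_le_sum fun s _ => hpt s
        _ = (∑ s, min (P s) (γstar * Q s))
              + (β - γstar) * ∑ s, Q s * (if P s ≤ γstar * Q s then (0:ℝ) else 1) := by
            rw [Finset.sum_add_distrib, Finset.mul_sum]
        _ = _ := by rw [hθ]
    linarith
end

section
/- Generalized Palzer–Timo converse: Let S, Ŝ be nonempty finite sets, P_S a probability mass function on S, d : S × Ŝ → ℝ≥0, d₀ ≥ 0, M a positive integer, and ι : S → ℝ an arbitrary function with β ∈ ℝ a threshold. For every encoder f : S → Fin M and decoder g : Fin M → Ŝ, the excess-distortion probability satisfies ∑_{s} P_S(s)·𝟙{d(s,g(f(s))) > d₀} ≥ ∑_{s} P_S(s)·𝟙{ι(s) ≥ β} − M · max_{ŝ∈Ŝ} ∑_{s} P_S(s)·𝟙{ι(s) ≥ β and d(s,ŝ) ≤ d₀}. -/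
open Finset
open scoped Classical

theorem generalized_palzer_timo_converse
    {S Shat : Type*} [Fintype S] [Fintype Shat] [Nonempty S] [Nonempty Shat]
    (P : S → ℝ) (hP0 : ∀ s, 0 ≤ P s) (hP1 : ∑ s, P s = 1)
    (d : S → Shat → ℝ) (hd : ∀ s sh, 0 ≤ d s sh)
    (d₀ : ℝ) (hd₀ : 0 ≤ d₀)
    (M : ℕ) (hM : 0 < M)
    (ι : S → ℝ) (β : ℝ)
    (f : S → Fin M) (g : Fin M → Shat) :
    ∑ s, P s * (if d₀ < d s (g (f s)) then (1:ℝ) else 0) ≥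
      (∑ s, P s * (if β ≤ ι s then (1:ℝ) else 0)) -
        M * (univ.sup' univ_nonempty
          (fun sh => ∑ s, P s * (if β ≤ ι s ∧ d s sh ≤ d₀ then (1:ℝ) else 0))) := by
  set sup := univ.sup' univ_nonempty
      (fun sh => ∑ s, P s * (if β ≤ ι s ∧ d s sh ≤ d₀ then (1:ℝ) else 0)) with hsup
  -- pointwise: 1{β≤ι} ≤ 1{d₀<d} + 1{β≤ι ∧ d≤d₀}
  have key : ∑ s, P s * (if β ≤ ι s then (1:ℝ) else 0) ≤
      (∑ s, P s * (if d₀ < d s (g (f s)) then (1:ℝ) else 0)) +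
      ∑ s, P s * (if β ≤ ι s ∧ d s (g (f s)) ≤ d₀ then (1:ℝ) else 0) := by
    rw [← Finset.sum_add_distrib]
    apply Finset.sum_le_sum
    intro s _
    rw [← mul_add]
    apply mul_le_mul_of_nonneg_left _ (hP0 s)
    split_ifs with h1 h2 h3 <;> simp_all <;> linarith
  -- success part ≤ M * sup
  have hfib : ∑ s, P s * (if β ≤ ι s ∧ d s (g (f s)) ≤ d₀ then (1:ℝ) else 0)
      ≤ M * sup := by
    have hsplit : ∑ s, P s * (if β ≤ ι s ∧ d s (g (f s)) ≤ d₀ then (1:ℝ) else 0)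
        = ∑ j : Fin M, ∑ s ∈ univ.filter (fun s => f s = j),
            P s * (if β ≤ ι s ∧ d s (g j) ≤ d₀ then (1:ℝ) else 0) := by
      rw [← Finset.sum_fiberwise (s := univ) (g := f)
        (f := fun s => P s * (if β ≤ ι s ∧ d s (g (f s)) ≤ d₀ then (1:ℝ) else 0))]
      apply Finset.sum_congr rfl
      intro j _
      apply Finset.sum_congr rfl
      intro s hs
      simp only [Finset.mem_filter] at hs
      rw [hs.2]
    rw [hsplit]
    have hbound : ∀ j : Fin M, ∑ s ∈ univ.filter (fun s => f s = j),
        P s * (if β ≤ ι s ∧ d s (g j) ≤ d₀ then (1:ℝ) else 0) ≤ sup := by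
      intro j
      calc ∑ s ∈ univ.filter (fun s => f s = j),
          P s * (if β ≤ ι s ∧ d s (g j) ≤ d₀ then (1:ℝ) else 0)
          ≤ ∑ s, P s * (if β ≤ ι s ∧ d s (g j) ≤ d₀ then (1:ℝ) else 0) := by
            apply Finset.sum_le_sum_of_subset_of_nonneg (Finset.filter_subset _ _)
            intro s _ _
            apply mul_nonneg (hP0 s)
            split <;> norm_num
        _ ≤ sup := by rw [hsup]; exact Finset.le_sup' (fun sh => ∑ s, P s * (if β ≤ ι s ∧ d s sh ≤ d₀ then (1:ℝ) else 0)) (Finset.mem_univ (g j))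
    calc ∑ j : Fin M, ∑ s ∈ univ.filter (fun s => f s = j),
        P s * (if β ≤ ι s ∧ d s (g j) ≤ d₀ then (1:ℝ) else 0)
        ≤ ∑ _j : Fin M, sup := Finset.sum_le_sum fun j _ => hbound j
      _ = M * sup := by simp [mul_comm]
  linarith
end

section
/- Metaconverse for lossless source coding with side information at the decoder: Let S₁, S₂ be nonempty finite sets, P a probability mass function on S₁ × S₂, and M₁ a positive integer. For every encoder f : S₁ → Fin M₁, every decoder g : Fin M₁ × S₂ → S₁, and every function φ : S₁ × S₂ → ℝ with 0 ≤ φ(s₁,s₂) ≤ P(s₁,s₂) for all (s₁,s₂), the error probability satisfies ∑_{s₁,s₂} P(s₁,s₂)·𝟙{g(f(s₁), s₂) ≠ s₁} ≥ ∑_{s₁,s₂} φ(s₁,s₂) − M₁ · ∑_{s₂∈S₂} max_{ŝ₁∈S₁} φ(ŝ₁, s₂). -/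
open Finset
open scoped Classical

theorem side_information_metaconverse
    {S₁ S₂ : Type*} [Fintype S₁] [Fintype S₂] [Nonempty S₁] [Nonempty S₂]
    [DecidableEq S₁]
    (P : S₁ → S₂ → ℝ) (hP0 : ∀ s₁ s₂, 0 ≤ P s₁ s₂) (hP1 : ∑ s₁, ∑ s₂, P s₁ s₂ = 1)
    (M₁ : ℕ) (hM₁ : 0 < M₁)
    (f : S₁ → Fin M₁) (g : Fin M₁ → S₂ → S₁)
    (φ : S₁ → S₂ → ℝ) (hφ0 : ∀ s₁ s₂, 0 ≤ φ s₁ s₂) (hφP : ∀ s₁ s₂, φ s₁ s₂ ≤ P s₁ s₂) :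
    ∑ s₁, ∑ s₂, P s₁ s₂ * (if g (f s₁) s₂ ≠ s₁ then (1:ℝ) else 0) ≥
      (∑ s₁, ∑ s₂, φ s₁ s₂) -
        M₁ * ∑ s₂, (univ.sup' univ_nonempty (fun sh₁ => φ sh₁ s₂)) := by
  have step1 : ∑ s₁, ∑ s₂, φ s₁ s₂ * (if g (f s₁) s₂ ≠ s₁ then (1:ℝ) else 0) ≤
      ∑ s₁, ∑ s₂, P s₁ s₂ * (if g (f s₁) s₂ ≠ s₁ then (1:ℝ) else 0) := by
    apply Finset.sum_le_sum; intro s₁ _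
    apply Finset.sum_le_sum; intro s₂ _
    by_cases h : g (f s₁) s₂ ≠ s₁ <;> simp [h, hφP s₁ s₂]
  have split : ∀ s₁ s₂, φ s₁ s₂ * (if g (f s₁) s₂ ≠ s₁ then (1:ℝ) else 0)
      = φ s₁ s₂ - φ s₁ s₂ * (if g (f s₁) s₂ = s₁ then (1:ℝ) else 0) := by
    intro s₁ s₂; by_cases h : g (f s₁) s₂ = s₁ <;> simp [h]
  have step2 : ∀ s₂, ∑ s₁, φ s₁ s₂ * (if g (f s₁) s₂ = s₁ then (1:ℝ) else 0)
      ≤ M₁ * univ.sup' univ_nonempty (fun sh₁ => φ sh₁ s₂) := by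
    intro s₂
    set A := univ.filter (fun s₁ => g (f s₁) s₂ = s₁) with hA
    have hsum : ∑ s₁, φ s₁ s₂ * (if g (f s₁) s₂ = s₁ then (1:ℝ) else 0)
        = ∑ s₁ ∈ A, φ s₁ s₂ := by
      rw [hA, Finset.sum_filter]
      apply Finset.sum_congr rfl; intro s₁ _
      by_cases h : g (f s₁) s₂ = s₁ <;> simp [h]
    rw [hsum]
    have hcard : A.card ≤ M₁ := by
      have : Set.InjOn f A := by
        intro a ha b hb hfab
        simp [hA] at ha hb
        rw [← ha, ← hb, hfab]
      calc A.card ≤ (Finset.univ : Finset (Fin M₁)).card :=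
            Finset.card_le_card_of_injOn f (fun _ _ => Finset.mem_univ _) this
        _ = M₁ := by simp
    calc ∑ s₁ ∈ A, φ s₁ s₂ ≤ ∑ _s₁ ∈ A, univ.sup' univ_nonempty (fun sh₁ => φ sh₁ s₂) := by
          apply Finset.sum_le_sum; intro s₁ _
          exact Finset.le_sup' (fun sh₁ => φ sh₁ s₂) (Finset.mem_univ s₁)
      _ = A.card * univ.sup' univ_nonempty (fun sh₁ => φ sh₁ s₂) := by
          rw [Finset.sum_const, nsmul_eq_mul]
      _ ≤ M₁ * univ.sup' univ_nonempty (fun sh₁ => φ sh₁ s₂) := by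
          apply mul_le_mul_of_nonneg_right (by exact_mod_cast hcard)
          exact le_trans (hφ0 (Classical.arbitrary S₁) s₂)
            (Finset.le_sup' (fun sh₁ => φ sh₁ s₂) (Finset.mem_univ _))
  refine le_trans ?_ step1
  simp only [split, Finset.sum_sub_distrib]
  rw [sub_le_sub_iff_left]
  rw [Finset.sum_comm, Finset.mul_sum]
  exact Finset.sum_le_sum (fun s₂ _ => step2 s₂)
end

section
/- Conditional-entropy-density converse for source coding with side information: Let S₁, S₂ be nonempty finite sets, P a probability mass function on S₁ × S₂ with marginal P₂(s₂) = ∑_{s₁} P(s₁,s₂), M₁ a positive integer, and β ≥ 0. For every encoder f : S₁ → Fin M₁ and decoder g : Fin M₁ × S₂ → S₁, the error probability satisfies ∑_{s₁,s₂} P(s₁,s₂)·𝟙{g(f(s₁),s₂) ≠ s₁} ≥ ∑_{s₁,s₂} P(s₁,s₂)·𝟙{P(s₁,s₂) ≤ P₂(s₂)·exp(−β)/M₁} − exp(−β). Equivalently, the error probability is at least ℙ[h_{S₁|S₂}(S₁|S₂) ≥ log M₁ + β] − exp(−β), where h_{S₁|S₂}(s₁|s₂) = −log(P(s₁,s₂)/P₂(s₂)).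 -/
open Finset
open scoped Classical

theorem side_information_entropy_density_converse
    {S₁ S₂ : Type*} [Fintype S₁] [Fintype S₂] [Nonempty S₁] [Nonempty S₂]
    [DecidableEq S₁]
    (P : S₁ → S₂ → ℝ) (hP0 : ∀ s₁ s₂, 0 ≤ P s₁ s₂) (hP1 : ∑ s₁, ∑ s₂, P s₁ s₂ = 1)
    (M₁ : ℕ) (hM₁ : 0 < M₁)
    (β : ℝ) (hβ : 0 ≤ β)
    (f : S₁ → Fin M₁) (g : Fin M₁ → S₂ → S₁) :
    ∑ s₁, ∑ s₂, P s₁ s₂ * (if g (f s₁) s₂ ≠ s₁ then (1:ℝ) else 0) ≥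
      (∑ s₁, ∑ s₂, P s₁ s₂ *
        (if P s₁ s₂ ≤ (∑ t₁, P t₁ s₂) * Real.exp (-β) / M₁ then (1:ℝ) else 0)) -
        Real.exp (-β) := by
  set e := Real.exp (-β) with he
  have he0 : 0 < e := Real.exp_pos _
  rw [ge_iff_le, sub_le_iff_le_add]
  have c1 : (∑ s₁, ∑ s₂, P s₁ s₂ * (if P s₁ s₂ ≤ (∑ t₁, P t₁ s₂) * e / M₁ then (1:ℝ) else 0))
      = ∑ s₂, ∑ s₁, P s₁ s₂ * (if P s₁ s₂ ≤ (∑ t₁, P t₁ s₂) * e / M₁ then (1:ℝ) else 0) :=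
    Finset.sum_comm
  have c2 : (∑ s₁, ∑ s₂, P s₁ s₂ * (if g (f s₁) s₂ ≠ s₁ then (1:ℝ) else 0))
      = ∑ s₂, ∑ s₁, P s₁ s₂ * (if g (f s₁) s₂ ≠ s₁ then (1:ℝ) else 0) := Finset.sum_comm
  rw [c1, c2]
  -- per s₂ bound
  have key : ∀ s₂ : S₂,
      ∑ s₁, P s₁ s₂ * (if P s₁ s₂ ≤ (∑ t₁, P t₁ s₂) * e / M₁ then (1:ℝ) else 0)
        ≤ (∑ s₁, P s₁ s₂ * (if g (f s₁) s₂ ≠ s₁ then (1:ℝ) else 0))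
          + (∑ t₁, P t₁ s₂) * e := by
    intro s₂
    set Q := ∑ t₁, P t₁ s₂ with hQ
    have hQ0 : 0 ≤ Q := Finset.sum_nonneg fun t₁ _ => hP0 t₁ s₂
    have hc0 : 0 ≤ Q * e / M₁ := by positivity
    have step : ∀ s₁ : S₁,
        P s₁ s₂ * (if P s₁ s₂ ≤ Q * e / M₁ then (1:ℝ) else 0)
          ≤ P s₁ s₂ * (if g (f s₁) s₂ ≠ s₁ then (1:ℝ) else 0)
            + (if g (f s₁) s₂ = s₁ then Q * e / M₁ else 0) := by
      intro s₁
      by_cases hcorr : g (f s₁) s₂ = s₁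
      · simp only [hcorr, ne_eq, not_true_eq_false, if_false, if_true, mul_zero, zero_add]
        by_cases hA : P s₁ s₂ ≤ Q * e / M₁
        · simpa [hA] using hA
        · simp [hA, hc0]
      · simp only [hcorr, ne_eq, not_false_eq_true, if_true, if_false, mul_one, add_zero]
        by_cases hA : P s₁ s₂ ≤ Q * e / M₁ <;> simp [hA, hP0 s₁ s₂]
    calc ∑ s₁, P s₁ s₂ * (if P s₁ s₂ ≤ Q * e / M₁ then (1:ℝ) else 0)
        ≤ ∑ s₁, (P s₁ s₂ * (if g (f s₁) s₂ ≠ s₁ then (1:ℝ) else 0)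
            + (if g (f s₁) s₂ = s₁ then Q * e / M₁ else 0)) :=
          Finset.sum_le_sum fun s₁ _ => step s₁
      _ = (∑ s₁, P s₁ s₂ * (if g (f s₁) s₂ ≠ s₁ then (1:ℝ) else 0))
            + ∑ s₁, (if g (f s₁) s₂ = s₁ then Q * e / M₁ else 0) := Finset.sum_add_distrib
      _ ≤ (∑ s₁, P s₁ s₂ * (if g (f s₁) s₂ ≠ s₁ then (1:ℝ) else 0)) + Q * e := by
          gcongr
          have hsum : ∑ s₁, (if g (f s₁) s₂ = s₁ then Q * e / M₁ else 0)
              = ((Finset.univ.filter (fun s₁ => g (f s₁) s₂ = s₁)).card : ℝ) * (Q * e / M₁) := by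
            rw [← Finset.sum_filter, Finset.sum_const, nsmul_eq_mul]
          rw [hsum]
          have hcard : (Finset.univ.filter (fun s₁ => g (f s₁) s₂ = s₁)).card ≤ M₁ := by
            have := Finset.card_le_card_of_injOn (f := fun s₁ => f s₁)
              (s := Finset.univ.filter (fun s₁ => g (f s₁) s₂ = s₁)) (t := Finset.univ)
              (fun _ _ => Finset.mem_univ _)
              (by
                intro a ha b hb hab
                simp only [Finset.mem_coe, Finset.mem_filter] at ha hb
                rw [← ha.2, ← hb.2]
                exact congrArg (fun m => g m s₂) hab)
            simpa using this
          calc ((Finset.univ.filter (fun s₁ => g (f s₁) s₂ = s₁)).card : ℝ) * (Q * e / M₁)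
              ≤ (M₁ : ℝ) * (Q * e / M₁) := by
                apply mul_le_mul_of_nonneg_right _ hc0
                exact_mod_cast hcard
            _ = Q * e := by
                field_simp
  calc ∑ s₂, ∑ s₁, P s₁ s₂ * (if P s₁ s₂ ≤ (∑ t₁, P t₁ s₂) * e / M₁ then (1:ℝ) else 0)
      ≤ ∑ s₂, ((∑ s₁, P s₁ s₂ * (if g (f s₁) s₂ ≠ s₁ then (1:ℝ) else 0))
          + (∑ t₁, P t₁ s₂) * e) := Finset.sum_le_sum fun s₂ _ => key s₂
    _ = (∑ s₂, ∑ s₁, P s₁ s₂ * (if g (f s₁) s₂ ≠ s₁ then (1:ℝ) else 0))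
          + (∑ s₂, ∑ t₁, P t₁ s₂) * e := by
        rw [Finset.sum_add_distrib, Finset.sum_mul]
    _ = (∑ s₂, ∑ s₁, P s₁ s₂ * (if g (f s₁) s₂ ≠ s₁ then (1:ℝ) else 0)) + e := by
        have h1 : (∑ s₂, ∑ t₁, P t₁ s₂) = 1 := by rw [Finset.sum_comm]; exact hP1
        rw [h1, one_mul]
end

section
/- Improved truncated converse for source coding with side information: Let S₁, S₂ be nonempty finite sets, P a probability mass function on S₁ × S₂ with marginal P₂(s₂) = ∑_{s₁} P(s₁,s₂), M₁ a positive integer, and β ≥ 0. For every encoder f : S₁ → Fin M₁ and decoder g : Fin M₁ × S₂ → S₁, the error probability satisfies ∑_{s₁,s₂} P(s₁,s₂)·𝟙{g(f(s₁),s₂) ≠ s₁} ≥ ∑_{s₁,s₂} min{P(s₁,s₂), P₂(s₂)·exp(−β)/M₁} − exp(−β). -/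
open Finset
open scoped Classical

theorem side_information_truncated_converse
    {S₁ S₂ : Type*} [Fintype S₁] [Fintype S₂] [Nonempty S₁] [Nonempty S₂]
    [DecidableEq S₁]
    (P : S₁ → S₂ → ℝ) (hP0 : ∀ s₁ s₂, 0 ≤ P s₁ s₂) (hP1 : ∑ s₁, ∑ s₂, P s₁ s₂ = 1)
    (M₁ : ℕ) (hM₁ : 0 < M₁)
    (β : ℝ) (hβ : 0 ≤ β)
    (f : S₁ → Fin M₁) (g : Fin M₁ → S₂ → S₁) :
    ∑ s₁, ∑ s₂, P s₁ s₂ * (if g (f s₁) s₂ ≠ s₁ then (1:ℝ) else 0) ≥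
      (∑ s₁, ∑ s₂, min (P s₁ s₂) ((∑ t₁, P t₁ s₂) * Real.exp (-β) / M₁)) -
        Real.exp (-β) := by
  set c := Real.exp (-β) with hc
  have hc0 : (0:ℝ) < c := Real.exp_pos _
  set φ : S₁ → S₂ → ℝ := fun s₁ s₂ => min (P s₁ s₂) ((∑ t₁, P t₁ s₂) * c / M₁) with hφ
  have hQ0 : ∀ s₂, 0 ≤ ∑ t₁, P t₁ s₂ := fun s₂ => Finset.sum_nonneg fun t _ => hP0 t s₂
  have hφ0 : ∀ s₁ s₂, 0 ≤ φ s₁ s₂ := by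
    intro s₁ s₂
    apply le_min (hP0 _ _)
    have h := hQ0 s₂
    positivity
  -- Step 1: error probability dominates truncated version
  have h1 : ∑ s₁, ∑ s₂, φ s₁ s₂ * (if g (f s₁) s₂ ≠ s₁ then (1:ℝ) else 0)
      ≤ ∑ s₁, ∑ s₂, P s₁ s₂ * (if g (f s₁) s₂ ≠ s₁ then (1:ℝ) else 0) := by
    refine Finset.sum_le_sum fun s₁ _ => Finset.sum_le_sum fun s₂ _ => ?_
    by_cases h : g (f s₁) s₂ ≠ s₁
    · rw [if_pos h, mul_one, mul_one]
      exact min_le_left _ _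
    · rw [if_neg h, mul_zero, mul_zero]
  -- Key bound: per s₂
  have key : ∀ s₂, ∑ s₁, φ s₁ s₂ * (if g (f s₁) s₂ = s₁ then (1:ℝ) else 0)
      ≤ (∑ t₁, P t₁ s₂) * c := by
    intro s₂
    set A : Finset S₁ := Finset.univ.filter (fun s₁ => g (f s₁) s₂ = s₁) with hA
    have e1 : ∑ s₁, φ s₁ s₂ * (if g (f s₁) s₂ = s₁ then (1:ℝ) else 0)
        = ∑ s₁ ∈ A, φ s₁ s₂ := by
      rw [hA, Finset.sum_filter]
      refine Finset.sum_congr rfl fun s₁ _ => ?_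
      split <;> ring
    have hinj : Set.InjOn f A := by
      intro a ha b hb hab
      have ha' : g (f a) s₂ = a := by simpa [hA] using ha
      have hb' : g (f b) s₂ = b := by simpa [hA] using hb
      rw [← ha', ← hb', hab]
    have e2 : ∑ s₁ ∈ A, φ s₁ s₂ = ∑ m ∈ A.image f, φ (g m s₂) s₂ := by
      rw [Finset.sum_image hinj]
      refine Finset.sum_congr rfl fun a ha => ?_
      have ha' : g (f a) s₂ = a := by simpa [hA] using ha
      rw [ha']
    have e3 : ∑ m ∈ A.image f, φ (g m s₂) s₂ ≤ ∑ m : Fin M₁, φ (g m s₂) s₂ :=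
      Finset.sum_le_sum_of_subset_of_nonneg (Finset.subset_univ _)
        (fun m _ _ => hφ0 _ _)
    have e4 : ∑ m : Fin M₁, φ (g m s₂) s₂ ≤ (∑ t₁, P t₁ s₂) * c := by
      calc ∑ m : Fin M₁, φ (g m s₂) s₂
          ≤ ∑ _m : Fin M₁, (∑ t₁, P t₁ s₂) * c / M₁ :=
            Finset.sum_le_sum fun m _ => min_le_right _ _
        _ = M₁ * ((∑ t₁, P t₁ s₂) * c / M₁) := by
            rw [Finset.sum_const, Finset.card_univ, Fintype.card_fin, nsmul_eq_mul]
        _ = (∑ t₁, P t₁ s₂) * c := by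
            field_simp
    rw [e1, e2]
    exact le_trans e3 e4
  -- Sum of correct-decoding mass is at most c
  have h2 : ∑ s₁, ∑ s₂, φ s₁ s₂ * (if g (f s₁) s₂ = s₁ then (1:ℝ) else 0) ≤ c := by
    rw [Finset.sum_comm]
    calc ∑ s₂, ∑ s₁, φ s₁ s₂ * (if g (f s₁) s₂ = s₁ then (1:ℝ) else 0)
        ≤ ∑ s₂, (∑ t₁, P t₁ s₂) * c := Finset.sum_le_sum fun s₂ _ => key s₂
      _ = (∑ s₂, ∑ t₁, P t₁ s₂) * c := by rw [Finset.sum_mul]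
      _ = 1 * c := by rw [Finset.sum_comm, hP1]
      _ = c := one_mul c
  -- decompose φ sum
  have h3 : ∑ s₁, ∑ s₂, φ s₁ s₂ * (if g (f s₁) s₂ ≠ s₁ then (1:ℝ) else 0)
      = (∑ s₁, ∑ s₂, φ s₁ s₂)
        - ∑ s₁, ∑ s₂, φ s₁ s₂ * (if g (f s₁) s₂ = s₁ then (1:ℝ) else 0) := by
    rw [← Finset.sum_sub_distrib]
    refine Finset.sum_congr rfl fun s₁ _ => ?_
    rw [← Finset.sum_sub_distrib]
    refine Finset.sum_congr rfl fun s₂ _ => ?_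
    by_cases h : g (f s₁) s₂ = s₁ <;> simp [h]
  have hgoal : (∑ s₁, ∑ s₂, φ s₁ s₂) - c
      ≤ ∑ s₁, ∑ s₂, P s₁ s₂ * (if g (f s₁) s₂ ≠ s₁ then (1:ℝ) else 0) := by
    refine le_trans ?_ h1
    rw [h3]
    linarith [h2]
  exact hgoal
end

section
/- Metaconverse for Slepian–Wolf coding: Let S₁, S₂ be nonempty finite sets, P a probability mass function on S₁ × S₂, and M₁, M₂ positive integers. For all encoders f₁ : S₁ → Fin M₁ and f₂ : S₂ → Fin M₂, every decoder g : Fin M₁ × Fin M₂ → S₁ × S₂, and all functions φ̂, φ¹, φ² : S₁ × S₂ → ℝ with 0 ≤ φ̂ ≤ P, 0 ≤ φ¹ ≤ P, 0 ≤ φ² ≤ P pointwise, the error probability satisfies ∑_{s₁,s₂} P(s₁,s₂)·𝟙{g(f₁(s₁), f₂(s₂)) ≠ (s₁,s₂)} ≥ ∑_{s₁,s₂} min{P(s₁,s₂), φ̂(s₁,s₂) + φ¹(s₁,s₂) + φ²(s₁,s₂)} − M₁·M₂·max_{(ŝ₁,ŝ₂)} φ̂(ŝ₁,ŝ₂) −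 M₁·∑_{s₂} max_{ŝ₁} φ¹(ŝ₁, s₂) − M₂·∑_{s₁} max_{ŝ₂} φ²(s₁, ŝ₂). -/
open Finset
open scoped Classical

theorem slepian_wolf_metaconverse
    {S₁ S₂ : Type*} [Fintype S₁] [Fintype S₂] [Nonempty S₁] [Nonempty S₂]
    [DecidableEq S₁] [DecidableEq S₂]
    (P : S₁ → S₂ → ℝ) (hP0 : ∀ s₁ s₂, 0 ≤ P s₁ s₂) (hP1 : ∑ s₁, ∑ s₂, P s₁ s₂ = 1)
    (M₁ M₂ : ℕ) (hM₁ : 0 < M₁) (hM₂ : 0 < M₂)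
    (f₁ : S₁ → Fin M₁) (f₂ : S₂ → Fin M₂) (g : Fin M₁ → Fin M₂ → S₁ × S₂)
    (φh φ1 φ2 : S₁ → S₂ → ℝ)
    (hφh0 : ∀ s₁ s₂, 0 ≤ φh s₁ s₂) (hφhP : ∀ s₁ s₂, φh s₁ s₂ ≤ P s₁ s₂)
    (hφ10 : ∀ s₁ s₂, 0 ≤ φ1 s₁ s₂) (hφ1P : ∀ s₁ s₂, φ1 s₁ s₂ ≤ P s₁ s₂)
    (hφ20 : ∀ s₁ s₂, 0 ≤ φ2 s₁ s₂) (hφ2P : ∀ s₁ s₂, φ2 s₁ s₂ ≤ P s₁ s₂) :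
    ∑ s₁, ∑ s₂, P s₁ s₂ * (if g (f₁ s₁) (f₂ s₂) ≠ (s₁, s₂) then (1:ℝ) else 0) ≥
      (∑ s₁, ∑ s₂, min (P s₁ s₂) (φh s₁ s₂ + φ1 s₁ s₂ + φ2 s₁ s₂)) -
        M₁ * M₂ * (univ.sup' univ_nonempty (fun p : S₁ × S₂ => φh p.1 p.2)) -
        M₁ * (∑ s₂, univ.sup' univ_nonempty (fun sh₁ => φ1 sh₁ s₂)) -
        M₂ * (∑ s₁, univ.sup' univ_nonempty (fun sh₂ => φ2 s₁ sh₂)) := by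
  classical
  -- Step 1: pointwise bound on min
  have hmin : ∀ s₁ s₂, min (P s₁ s₂) (φh s₁ s₂ + φ1 s₁ s₂ + φ2 s₁ s₂) ≤
      ((if g (f₁ s₁) (f₂ s₂) = (s₁, s₂) then φh s₁ s₂ else 0) +
       (if g (f₁ s₁) (f₂ s₂) = (s₁, s₂) then φ1 s₁ s₂ else 0) +
       (if g (f₁ s₁) (f₂ s₂) = (s₁, s₂) then φ2 s₁ s₂ else 0)) +
      P s₁ s₂ * (if g (f₁ s₁) (f₂ s₂) ≠ (s₁, s₂) then (1:ℝ) else 0) := by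
    intro s₁ s₂
    by_cases h : g (f₁ s₁) (f₂ s₂) = (s₁, s₂)
    · simp only [h, ne_eq, not_true_eq_false, if_false, ite_true, mul_zero, add_zero]
      exact min_le_right _ _
    · simp only [h, ne_eq, not_false_eq_true, ite_false, ite_true, mul_one, add_zero, zero_add]
      exact min_le_left _ _
  have step1 : (∑ s₁, ∑ s₂, min (P s₁ s₂) (φh s₁ s₂ + φ1 s₁ s₂ + φ2 s₁ s₂)) ≤
      (∑ s₁, ∑ s₂, if g (f₁ s₁) (f₂ s₂) = (s₁, s₂) then φh s₁ s₂ else 0) +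
      (∑ s₁, ∑ s₂, if g (f₁ s₁) (f₂ s₂) = (s₁, s₂) then φ1 s₁ s₂ else 0) +
      (∑ s₁, ∑ s₂, if g (f₁ s₁) (f₂ s₂) = (s₁, s₂) then φ2 s₁ s₂ else 0) +
      (∑ s₁, ∑ s₂, P s₁ s₂ * (if g (f₁ s₁) (f₂ s₂) ≠ (s₁, s₂) then (1:ℝ) else 0)) := by
    have h := Finset.sum_le_sum (fun s₁ (_ : s₁ ∈ univ) =>
      Finset.sum_le_sum (fun s₂ (_ : s₂ ∈ univ) => hmin s₁ s₂))
    calc (∑ s₁, ∑ s₂, min (P s₁ s₂) (φh s₁ s₂ + φ1 s₁ s₂ + φ2 s₁ s₂)) ≤ _ := h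
    _ = _ := by simp only [Finset.sum_add_distrib]
  -- nonnegativity of sups
  have hbh0 : (0:ℝ) ≤ univ.sup' univ_nonempty (fun p : S₁ × S₂ => φh p.1 p.2) := by
    obtain ⟨p⟩ : Nonempty (S₁ × S₂) := inferInstance
    exact le_trans (hφh0 p.1 p.2)
      (Finset.le_sup' (f := fun p : S₁ × S₂ => φh p.1 p.2) (mem_univ p))
  have hb10 : ∀ s₂, (0:ℝ) ≤ univ.sup' univ_nonempty (fun sh₁ => φ1 sh₁ s₂) := by
    intro s₂
    obtain ⟨a⟩ : Nonempty S₁ := inferInstance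
    exact le_trans (hφ10 a s₂) (Finset.le_sup' (f := fun sh₁ => φ1 sh₁ s₂) (mem_univ a))
  have hb20 : ∀ s₁, (0:ℝ) ≤ univ.sup' univ_nonempty (fun sh₂ => φ2 s₁ sh₂) := by
    intro s₁
    obtain ⟨a⟩ : Nonempty S₂ := inferInstance
    exact le_trans (hφ20 s₁ a) (Finset.le_sup' (f := fun sh₂ => φ2 s₁ sh₂) (mem_univ a))
  -- Bound for the φh term
  have Bh : (∑ s₁, ∑ s₂, if g (f₁ s₁) (f₂ s₂) = (s₁, s₂) then φh s₁ s₂ else 0)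
      ≤ (M₁ : ℝ) * M₂ * univ.sup' univ_nonempty (fun p : S₁ × S₂ => φh p.1 p.2) := by
    set C : Finset (S₁ × S₂) := univ.filter (fun p => g (f₁ p.1) (f₂ p.2) = p) with hC
    have hrw : (∑ s₁, ∑ s₂, if g (f₁ s₁) (f₂ s₂) = (s₁, s₂) then φh s₁ s₂ else 0)
        = ∑ p ∈ C, φh p.1 p.2 := by
      rw [hC, Finset.sum_filter]
      exact (Fintype.sum_prod_type
        (f := fun p : S₁ × S₂ => if g (f₁ p.1) (f₂ p.2) = p then φh p.1 p.2 else 0)).symm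
    have hinj : Set.InjOn (fun p : S₁ × S₂ => (f₁ p.1, f₂ p.2)) ↑C := by
      intro p hp q hq hpq
      simp only [hC, Finset.coe_filter, Set.mem_setOf_eq, mem_univ, true_and] at hp hq
      have h1 : f₁ p.1 = f₁ q.1 := congrArg Prod.fst hpq
      have h2 : f₂ p.2 = f₂ q.2 := congrArg Prod.snd hpq
      have := hp; rw [h1, h2, hq] at this; exact this.symm
    have hcard : C.card ≤ M₁ * M₂ := by
      have h := Finset.card_le_card_of_injOn (t := (univ : Finset (Fin M₁ × Fin M₂)))
        (fun p : S₁ × S₂ => (f₁ p.1, f₂ p.2)) (fun p _ => mem_univ _) hinj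
      simpa [Fintype.card_prod] using h
    rw [hrw]
    calc ∑ p ∈ C, φh p.1 p.2
        ≤ ∑ _p ∈ C, univ.sup' univ_nonempty (fun p : S₁ × S₂ => φh p.1 p.2) :=
          Finset.sum_le_sum (fun p _ =>
            Finset.le_sup' (f := fun p : S₁ × S₂ => φh p.1 p.2) (mem_univ p))
      _ = (C.card : ℝ) * _ := by rw [Finset.sum_const, nsmul_eq_mul]
      _ ≤ ((M₁ * M₂ : ℕ) : ℝ) * _ :=
          mul_le_mul_of_nonneg_right (by exact_mod_cast hcard) hbh0
      _ = (M₁ : ℝ) * M₂ * _ := by push_cast; ring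
  -- Bound for the φ1 term
  have B1 : (∑ s₁, ∑ s₂, if g (f₁ s₁) (f₂ s₂) = (s₁, s₂) then φ1 s₁ s₂ else 0)
      ≤ (M₁ : ℝ) * ∑ s₂, univ.sup' univ_nonempty (fun sh₁ => φ1 sh₁ s₂) := by
    rw [Finset.sum_comm, Finset.mul_sum]
    refine Finset.sum_le_sum (fun s₂ _ => ?_)
    set F : Finset S₁ := univ.filter (fun s₁ => g (f₁ s₁) (f₂ s₂) = (s₁, s₂)) with hF
    have hrw : (∑ s₁, if g (f₁ s₁) (f₂ s₂) = (s₁, s₂) then φ1 s₁ s₂ else 0)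
        = ∑ s₁ ∈ F, φ1 s₁ s₂ := by rw [hF, Finset.sum_filter]
    have hinj : Set.InjOn f₁ ↑F := by
      intro a ha b hb hab
      simp only [hF, Finset.coe_filter, Set.mem_setOf_eq, mem_univ, true_and] at ha hb
      have := ha; rw [hab, hb] at this
      exact ((Prod.mk.injEq _ _ _ _).mp this).1.symm
    have hcard : F.card ≤ M₁ := by
      have h := Finset.card_le_card_of_injOn (t := (univ : Finset (Fin M₁)))
        f₁ (fun s _ => mem_univ _) hinj
      simpa using h
    rw [hrw]
    calc ∑ s₁ ∈ F, φ1 s₁ s₂ ≤ ∑ _s₁ ∈ F, univ.sup' univ_nonempty (fun sh₁ => φ1 sh₁ s₂) :=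
          Finset.sum_le_sum (fun s₁ _ =>
            Finset.le_sup' (f := fun sh₁ => φ1 sh₁ s₂) (mem_univ s₁))
      _ = (F.card : ℝ) * _ := by rw [Finset.sum_const, nsmul_eq_mul]
      _ ≤ (M₁ : ℝ) * _ := mul_le_mul_of_nonneg_right (by exact_mod_cast hcard) (hb10 s₂)
  -- Bound for the φ2 term
  have B2 : (∑ s₁, ∑ s₂, if g (f₁ s₁) (f₂ s₂) = (s₁, s₂) then φ2 s₁ s₂ else 0)
      ≤ (M₂ : ℝ) * ∑ s₁, univ.sup' univ_nonempty (fun sh₂ => φ2 s₁ sh₂) := by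
    rw [Finset.mul_sum]
    refine Finset.sum_le_sum (fun s₁ _ => ?_)
    set F : Finset S₂ := univ.filter (fun s₂ => g (f₁ s₁) (f₂ s₂) = (s₁, s₂)) with hF
    have hrw : (∑ s₂, if g (f₁ s₁) (f₂ s₂) = (s₁, s₂) then φ2 s₁ s₂ else 0)
        = ∑ s₂ ∈ F, φ2 s₁ s₂ := by rw [hF, Finset.sum_filter]
    have hinj : Set.InjOn f₂ ↑F := by
      intro a ha b hb hab
      simp only [hF, Finset.coe_filter, Set.mem_setOf_eq, mem_univ, true_and] at ha hb
      have := ha; rw [hab, hb] at this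
      exact ((Prod.mk.injEq _ _ _ _).mp this).2.symm
    have hcard : F.card ≤ M₂ := by
      have h := Finset.card_le_card_of_injOn (t := (univ : Finset (Fin M₂)))
        f₂ (fun s _ => mem_univ _) hinj
      simpa using h
    rw [hrw]
    calc ∑ s₂ ∈ F, φ2 s₁ s₂ ≤ ∑ _s₂ ∈ F, univ.sup' univ_nonempty (fun sh₂ => φ2 s₁ sh₂) :=
          Finset.sum_le_sum (fun s₂ _ =>
            Finset.le_sup' (f := fun sh₂ => φ2 s₁ sh₂) (mem_univ s₂))
      _ = (F.card : ℝ) * _ := by rw [Finset.sum_const, nsmul_eq_mul]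
      _ ≤ (M₂ : ℝ) * _ := mul_le_mul_of_nonneg_right (by exact_mod_cast hcard) (hb20 s₁)
  linarith [step1, Bh, B1, B2]
end

section
/- Slepian–Wolf converse via an induced side-information code: Let S₁, S₂ be nonempty finite sets, P a probability mass function on S₁ × S₂, and M₁, M₂ positive integers. For every Slepian–Wolf code (f₁ : S₁ → Fin M₁, f₂ : S₂ → Fin M₂, g : Fin M₁ × Fin M₂ → S₁ × S₂) and every φ : S₁ × S₂ → ℝ with 0 ≤ φ ≤ P pointwise, the error probability satisfies ∑_{s₁,s₂} P(s₁,s₂)·𝟙{g(f₁(s₁),f₂(s₂)) ≠ (s₁,s₂)} ≥ ∑_{s₁,s₂} φ(s₁,s₂) − M₁·∑_{s₂} max_{ŝ₁} φ(ŝ₁,s₂). -/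
open Finset
open scoped Classical

theorem slepian_wolf_via_side_information
    {S₁ S₂ : Type*} [Fintype S₁] [Fintype S₂] [Nonempty S₁] [Nonempty S₂]
    [DecidableEq S₁] [DecidableEq S₂]
    (P : S₁ → S₂ → ℝ) (hP0 : ∀ s₁ s₂, 0 ≤ P s₁ s₂) (hP1 : ∑ s₁, ∑ s₂, P s₁ s₂ = 1)
    (M₁ M₂ : ℕ) (hM₁ : 0 < M₁) (hM₂ : 0 < M₂)
    (f₁ : S₁ → Fin M₁) (f₂ : S₂ → Fin M₂) (g : Fin M₁ → Fin M₂ → S₁ × S₂)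
    (φ : S₁ → S₂ → ℝ) (hφ0 : ∀ s₁ s₂, 0 ≤ φ s₁ s₂) (hφP : ∀ s₁ s₂, φ s₁ s₂ ≤ P s₁ s₂) :
    ∑ s₁, ∑ s₂, P s₁ s₂ * (if g (f₁ s₁) (f₂ s₂) ≠ (s₁, s₂) then (1:ℝ) else 0) ≥
      (∑ s₁, ∑ s₂, φ s₁ s₂) -
        M₁ * (∑ s₂, univ.sup' univ_nonempty (fun sh₁ => φ sh₁ s₂)) := by
  set g' : Fin M₁ → S₂ → S₁ := fun m₁ s₂ => (g m₁ (f₂ s₂)).1 with hg'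
  have hsup0 : ∀ s₂, (0:ℝ) ≤ univ.sup' univ_nonempty (fun sh₁ => φ sh₁ s₂) := by
    intro s₂
    obtain ⟨a⟩ := (inferInstance : Nonempty S₁)
    exact le_trans (hφ0 a s₂) (le_sup' (fun sh₁ => φ sh₁ s₂) (mem_univ a))
  -- step 1: LHS ≥ ∑∑ φ * 1{g' wrong}
  have step1 : ∑ s₁, ∑ s₂, P s₁ s₂ * (if g (f₁ s₁) (f₂ s₂) ≠ (s₁, s₂) then (1:ℝ) else 0) ≥
      ∑ s₁, ∑ s₂, φ s₁ s₂ * (if g' (f₁ s₁) s₂ ≠ s₁ then (1:ℝ) else 0) := by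
    apply Finset.sum_le_sum; intro s₁ _
    apply Finset.sum_le_sum; intro s₂ _
    by_cases h : g' (f₁ s₁) s₂ ≠ s₁
    · have h2 : g (f₁ s₁) (f₂ s₂) ≠ (s₁, s₂) := by
        intro hc; exact h (by simp [hg', hc])
      rw [if_pos h, if_pos h2]
      simpa using hφP s₁ s₂
    · simp only [h, if_false]
      have := hP0 s₁ s₂
      split <;> nlinarith
  -- step 2: rewrite the φ sum
  have step2 : ∑ s₁, ∑ s₂, φ s₁ s₂ * (if g' (f₁ s₁) s₂ ≠ s₁ then (1:ℝ) else 0) =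
      (∑ s₁, ∑ s₂, φ s₁ s₂) -
        ∑ s₂, ∑ s₁, φ s₁ s₂ * (if g' (f₁ s₁) s₂ = s₁ then (1:ℝ) else 0) := by
    rw [Finset.sum_comm (f := fun s₂ s₁ => φ s₁ s₂ * (if g' (f₁ s₁) s₂ = s₁ then (1:ℝ) else 0))]
    rw [← Finset.sum_sub_distrib]
    apply Finset.sum_congr rfl; intro s₁ _
    rw [← Finset.sum_sub_distrib]
    apply Finset.sum_congr rfl; intro s₂ _
    by_cases h : g' (f₁ s₁) s₂ = s₁ <;> simp [h]
  -- step 3: bound the correct part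
  have step3 : ∀ s₂, ∑ s₁, φ s₁ s₂ * (if g' (f₁ s₁) s₂ = s₁ then (1:ℝ) else 0) ≤
      M₁ * univ.sup' univ_nonempty (fun sh₁ => φ sh₁ s₂) := by
    intro s₂
    have : ∑ s₁, φ s₁ s₂ * (if g' (f₁ s₁) s₂ = s₁ then (1:ℝ) else 0) =
        ∑ s₁ ∈ univ.filter (fun s₁ => g' (f₁ s₁) s₂ = s₁), φ s₁ s₂ := by
      rw [Finset.sum_filter]
      apply Finset.sum_congr rfl; intro s₁ _
      by_cases h : g' (f₁ s₁) s₂ = s₁ <;> simp [h]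
    rw [this]
    have hcard : (univ.filter (fun s₁ => g' (f₁ s₁) s₂ = s₁)).card ≤ M₁ := by
      have hinj : Set.InjOn f₁ (univ.filter (fun s₁ => g' (f₁ s₁) s₂ = s₁)) := by
        intro a ha b hb hab
        simp only [coe_filter, Set.mem_setOf_eq] at ha hb
        rw [← ha.2, ← hb.2, hab]
      calc (univ.filter (fun s₁ => g' (f₁ s₁) s₂ = s₁)).card
          = ((univ.filter (fun s₁ => g' (f₁ s₁) s₂ = s₁)).image f₁).card :=
            (Finset.card_image_of_injOn hinj).symm
        _ ≤ Fintype.card (Fin M₁) := Finset.card_le_univ _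
        _ = M₁ := Fintype.card_fin M₁
    calc ∑ s₁ ∈ univ.filter (fun s₁ => g' (f₁ s₁) s₂ = s₁), φ s₁ s₂
        ≤ ∑ _s₁ ∈ univ.filter (fun s₁ => g' (f₁ s₁) s₂ = s₁),
            univ.sup' univ_nonempty (fun sh₁ => φ sh₁ s₂) := by
          apply Finset.sum_le_sum; intro s₁ _
          exact le_sup' (fun sh₁ => φ sh₁ s₂) (mem_univ s₁)
      _ = (univ.filter (fun s₁ => g' (f₁ s₁) s₂ = s₁)).card *
            univ.sup' univ_nonempty (fun sh₁ => φ sh₁ s₂) := by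
          rw [Finset.sum_const, nsmul_eq_mul]
      _ ≤ M₁ * univ.sup' univ_nonempty (fun sh₁ => φ sh₁ s₂) := by
          apply mul_le_mul_of_nonneg_right _ (hsup0 s₂)
          exact_mod_cast hcard
  have step4 : ∑ s₂, ∑ s₁, φ s₁ s₂ * (if g' (f₁ s₁) s₂ = s₁ then (1:ℝ) else 0) ≤
      M₁ * ∑ s₂, univ.sup' univ_nonempty (fun sh₁ => φ sh₁ s₂) := by
    rw [Finset.mul_sum]
    exact Finset.sum_le_sum (fun s₂ _ => step3 s₂)
  linarith [step1, step2.ge, step2.le, step4]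
end

section
/- Miyake–Kanaya converse for Slepian–Wolf coding: Let S₁, S₂ be nonempty finite sets, P a probability mass function on S₁ × S₂ with marginals P₁(s₁) = ∑_{s₂} P(s₁,s₂) and P₂(s₂) = ∑_{s₁} P(s₁,s₂), M₁, M₂ positive integers, and β > 0. For every Slepian–Wolf code (f₁, f₂, g), the error probability satisfies ∑_{s₁,s₂} P(s₁,s₂)·𝟙{g(f₁(s₁),f₂(s₂)) ≠ (s₁,s₂)} ≥ ∑_{s₁,s₂} P(s₁,s₂)·𝟙{ P(s₁,s₂) ≤ exp(−β)/(M₁M₂) or P(s₁,s₂) ≤ P₂(s₂)·exp(−β)/M₁ or P(s₁,s₂) ≤ P₁(s₁)·exp(−β)/M₂ } − 3·exp(−β). -/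
open Finset
open scoped Classical

theorem miyake_kanaya_converse
    {S₁ S₂ : Type*} [Fintype S₁] [Fintype S₂] [Nonempty S₁] [Nonempty S₂]
    [DecidableEq S₁] [DecidableEq S₂]
    (P : S₁ → S₂ → ℝ) (hP0 : ∀ s₁ s₂, 0 ≤ P s₁ s₂) (hP1 : ∑ s₁, ∑ s₂, P s₁ s₂ = 1)
    (M₁ M₂ : ℕ) (hM₁ : 0 < M₁) (hM₂ : 0 < M₂)
    (β : ℝ) (hβ : 0 < β)
    (f₁ : S₁ → Fin M₁) (f₂ : S₂ → Fin M₂) (g : Fin M₁ → Fin M₂ → S₁ × S₂) :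
    ∑ s₁, ∑ s₂, P s₁ s₂ * (if g (f₁ s₁) (f₂ s₂) ≠ (s₁, s₂) then (1:ℝ) else 0) ≥
      (∑ s₁, ∑ s₂, P s₁ s₂ *
        (if P s₁ s₂ ≤ Real.exp (-β) / (M₁ * M₂) ∨
            P s₁ s₂ ≤ (∑ t₁, P t₁ s₂) * Real.exp (-β) / M₁ ∨
            P s₁ s₂ ≤ (∑ t₂, P s₁ t₂) * Real.exp (-β) / M₂
          then (1:ℝ) else 0)) - 3 * Real.exp (-β) := by
  have hEpos : (0:ℝ) < Real.exp (-β) := Real.exp_pos _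
  have hM₁' : (0:ℝ) < (M₁:ℝ) := by exact_mod_cast hM₁
  have hM₂' : (0:ℝ) < (M₂:ℝ) := by exact_mod_cast hM₂
  set E : ℝ := Real.exp (-β) with hE
  have hPm2 : ∀ s₂, (0:ℝ) ≤ ∑ t₁, P t₁ s₂ :=
    fun s₂ => Finset.sum_nonneg fun t₁ _ => hP0 t₁ s₂
  have hPm1 : ∀ s₁, (0:ℝ) ≤ ∑ t₂, P s₁ t₂ :=
    fun s₁ => Finset.sum_nonneg fun t₂ _ => hP0 s₁ t₂
  -- pointwise bound
  have key : ∀ s₁ s₂,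
      P s₁ s₂ * (if P s₁ s₂ ≤ E / (M₁ * M₂) ∨
            P s₁ s₂ ≤ (∑ t₁, P t₁ s₂) * E / M₁ ∨
            P s₁ s₂ ≤ (∑ t₂, P s₁ t₂) * E / M₂ then (1:ℝ) else 0)
      ≤ P s₁ s₂ * (if g (f₁ s₁) (f₂ s₂) ≠ (s₁, s₂) then (1:ℝ) else 0)
        + (if g (f₁ s₁) (f₂ s₂) = (s₁, s₂) ∧ P s₁ s₂ ≤ E / (M₁ * M₂) then P s₁ s₂ else 0)
        + (if g (f₁ s₁) (f₂ s₂) = (s₁, s₂) ∧ P s₁ s₂ ≤ (∑ t₁, P t₁ s₂) * E / M₁ then P s₁ s₂ else 0)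
        + (if g (f₁ s₁) (f₂ s₂) = (s₁, s₂) ∧ P s₁ s₂ ≤ (∑ t₂, P s₁ t₂) * E / M₂ then P s₁ s₂ else 0) := by
    intro s₁ s₂
    have h0 := hP0 s₁ s₂
    by_cases h : g (f₁ s₁) (f₂ s₂) = (s₁, s₂)
    · simp only [h, ne_eq, not_true_eq_false, if_false, mul_zero, true_and, zero_add]
      split_ifs <;> first | linarith | tauto
    · simp only [h, ne_eq, not_false_eq_true, if_true, mul_one, false_and, if_false,
        add_zero]
      split_ifs <;> linarith
  -- bound the first correction term
  have hA : (∑ s₁, ∑ s₂, (if g (f₁ s₁) (f₂ s₂) = (s₁, s₂) ∧ P s₁ s₂ ≤ E / (M₁ * M₂)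
      then P s₁ s₂ else 0)) ≤ E := by
    rw [← Finset.sum_product']
    rw [show ((Finset.univ : Finset S₁) ×ˢ (Finset.univ : Finset S₂)) =
      (Finset.univ : Finset (S₁ × S₂)) from Finset.univ_product_univ]
    have hrw : (∑ p : S₁ × S₂, (if g (f₁ p.1) (f₂ p.2) = (p.1, p.2) ∧ P p.1 p.2 ≤ E / (M₁ * M₂)
        then P p.1 p.2 else 0))
        = ∑ p ∈ Finset.univ.filter (fun p : S₁ × S₂ =>
            g (f₁ p.1) (f₂ p.2) = (p.1, p.2) ∧ P p.1 p.2 ≤ E / (M₁ * M₂)), P p.1 p.2 :=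
      (Finset.sum_filter _ _).symm
    rw [hrw]
    set T := Finset.univ.filter (fun p : S₁ × S₂ =>
      g (f₁ p.1) (f₂ p.2) = (p.1, p.2) ∧ P p.1 p.2 ≤ E / (M₁ * M₂)) with hT
    have hcard : (T.card : ℝ) ≤ (M₁ : ℝ) * M₂ := by
      have hc : T.card ≤ (Finset.univ : Finset (Fin M₁ × Fin M₂)).card := by
        apply Finset.card_le_card_of_injOn (fun p : S₁ × S₂ => (f₁ p.1, f₂ p.2))
          (fun a _ => Finset.mem_univ _)
        intro a ha b hb hab
        simp only [hT, Finset.mem_coe, Finset.mem_filter] at ha hb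
        have h1 : f₁ a.1 = f₁ b.1 := congrArg Prod.fst hab
        have h2 : f₂ a.2 = f₂ b.2 := congrArg Prod.snd hab
        have : (a.1, a.2) = (b.1, b.2) := by
          rw [← ha.2.1, ← hb.2.1, h1, h2]
        calc a = (a.1, a.2) := rfl
          _ = (b.1, b.2) := this
          _ = b := rfl
      have : T.card ≤ M₁ * M₂ := by simpa using hc
      exact_mod_cast (by exact_mod_cast this : (T.card : ℝ) ≤ ((M₁ * M₂ : ℕ) : ℝ))
    calc ∑ p ∈ T, P p.1 p.2 ≤ ∑ _p ∈ T, E / (M₁ * M₂) :=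
          Finset.sum_le_sum (fun p hp => (Finset.mem_filter.mp hp).2.2)
      _ = (T.card : ℝ) * (E / (M₁ * M₂)) := by rw [Finset.sum_const, nsmul_eq_mul]
      _ ≤ ((M₁ : ℝ) * M₂) * (E / (M₁ * M₂)) := by
          apply mul_le_mul_of_nonneg_right hcard (by positivity)
      _ = E := by field_simp
  -- bound the second correction term
  have hB : (∑ s₁, ∑ s₂, (if g (f₁ s₁) (f₂ s₂) = (s₁, s₂) ∧ P s₁ s₂ ≤ (∑ t₁, P t₁ s₂) * E / M₁
      then P s₁ s₂ else 0)) ≤ E := by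
    rw [Finset.sum_comm]
    have hinner : ∀ s₂, (∑ s₁, (if g (f₁ s₁) (f₂ s₂) = (s₁, s₂) ∧
        P s₁ s₂ ≤ (∑ t₁, P t₁ s₂) * E / M₁ then P s₁ s₂ else 0)) ≤ (∑ t₁, P t₁ s₂) * E := by
      intro s₂
      rw [show (∑ s₁, (if g (f₁ s₁) (f₂ s₂) = (s₁, s₂) ∧
          P s₁ s₂ ≤ (∑ t₁, P t₁ s₂) * E / M₁ then P s₁ s₂ else 0))
          = ∑ s₁ ∈ Finset.univ.filter (fun s₁ => g (f₁ s₁) (f₂ s₂) = (s₁, s₂) ∧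
            P s₁ s₂ ≤ (∑ t₁, P t₁ s₂) * E / M₁), P s₁ s₂ from (Finset.sum_filter _ _).symm]
      set T := Finset.univ.filter (fun s₁ => g (f₁ s₁) (f₂ s₂) = (s₁, s₂) ∧
        P s₁ s₂ ≤ (∑ t₁, P t₁ s₂) * E / M₁) with hT
      have hcard : (T.card : ℝ) ≤ (M₁ : ℝ) := by
        have hc : T.card ≤ (Finset.univ : Finset (Fin M₁)).card := by
          apply Finset.card_le_card_of_injOn f₁ (fun a _ => Finset.mem_univ _)
          intro a ha b hb hab
          simp only [hT, Finset.mem_coe, Finset.mem_filter] at ha hb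
          have : (a, s₂) = (b, s₂) := by rw [← ha.2.1, ← hb.2.1, hab]
          exact congrArg Prod.fst this
        have : T.card ≤ M₁ := by simpa using hc
        exact_mod_cast this
      calc ∑ s₁ ∈ T, P s₁ s₂ ≤ ∑ _s₁ ∈ T, (∑ t₁, P t₁ s₂) * E / M₁ :=
            Finset.sum_le_sum (fun s₁ hs₁ => (Finset.mem_filter.mp hs₁).2.2)
        _ = (T.card : ℝ) * ((∑ t₁, P t₁ s₂) * E / M₁) := by rw [Finset.sum_const, nsmul_eq_mul]
        _ ≤ (M₁ : ℝ) * ((∑ t₁, P t₁ s₂) * E / M₁) := by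
            apply mul_le_mul_of_nonneg_right hcard (div_nonneg (mul_nonneg (hPm2 s₂) hEpos.le) hM₁'.le)
        _ = (∑ t₁, P t₁ s₂) * E := by field_simp
    calc (∑ s₂, ∑ s₁, (if g (f₁ s₁) (f₂ s₂) = (s₁, s₂) ∧
          P s₁ s₂ ≤ (∑ t₁, P t₁ s₂) * E / M₁ then P s₁ s₂ else 0))
        ≤ ∑ s₂, (∑ t₁, P t₁ s₂) * E := Finset.sum_le_sum fun s₂ _ => hinner s₂
      _ = (∑ s₂, ∑ t₁, P t₁ s₂) * E := by rw [Finset.sum_mul]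
      _ = 1 * E := by rw [Finset.sum_comm, hP1]
      _ = E := one_mul E
  -- bound the third correction term
  have hC : (∑ s₁, ∑ s₂, (if g (f₁ s₁) (f₂ s₂) = (s₁, s₂) ∧ P s₁ s₂ ≤ (∑ t₂, P s₁ t₂) * E / M₂
      then P s₁ s₂ else 0)) ≤ E := by
    have hinner : ∀ s₁, (∑ s₂, (if g (f₁ s₁) (f₂ s₂) = (s₁, s₂) ∧
        P s₁ s₂ ≤ (∑ t₂, P s₁ t₂) * E / M₂ then P s₁ s₂ else 0)) ≤ (∑ t₂, P s₁ t₂) * E := by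
      intro s₁
      rw [show (∑ s₂, (if g (f₁ s₁) (f₂ s₂) = (s₁, s₂) ∧
          P s₁ s₂ ≤ (∑ t₂, P s₁ t₂) * E / M₂ then P s₁ s₂ else 0))
          = ∑ s₂ ∈ Finset.univ.filter (fun s₂ => g (f₁ s₁) (f₂ s₂) = (s₁, s₂) ∧
            P s₁ s₂ ≤ (∑ t₂, P s₁ t₂) * E / M₂), P s₁ s₂ from (Finset.sum_filter _ _).symm]
      set T := Finset.univ.filter (fun s₂ => g (f₁ s₁) (f₂ s₂) = (s₁, s₂) ∧
        P s₁ s₂ ≤ (∑ t₂, P s₁ t₂) * E / M₂) with hT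
      have hcard : (T.card : ℝ) ≤ (M₂ : ℝ) := by
        have hc : T.card ≤ (Finset.univ : Finset (Fin M₂)).card := by
          apply Finset.card_le_card_of_injOn f₂ (fun a _ => Finset.mem_univ _)
          intro a ha b hb hab
          simp only [hT, Finset.mem_coe, Finset.mem_filter] at ha hb
          have : (s₁, a) = (s₁, b) := by rw [← ha.2.1, ← hb.2.1, hab]
          exact congrArg Prod.snd this
        have : T.card ≤ M₂ := by simpa using hc
        exact_mod_cast this
      calc ∑ s₂ ∈ T, P s₁ s₂ ≤ ∑ _s₂ ∈ T, (∑ t₂, P s₁ t₂) * E / M₂ :=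
            Finset.sum_le_sum (fun s₂ hs₂ => (Finset.mem_filter.mp hs₂).2.2)
        _ = (T.card : ℝ) * ((∑ t₂, P s₁ t₂) * E / M₂) := by rw [Finset.sum_const, nsmul_eq_mul]
        _ ≤ (M₂ : ℝ) * ((∑ t₂, P s₁ t₂) * E / M₂) := by
            apply mul_le_mul_of_nonneg_right hcard (div_nonneg (mul_nonneg (hPm1 s₁) hEpos.le) hM₂'.le)
        _ = (∑ t₂, P s₁ t₂) * E := by field_simp
    calc (∑ s₁, ∑ s₂, (if g (f₁ s₁) (f₂ s₂) = (s₁, s₂) ∧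
          P s₁ s₂ ≤ (∑ t₂, P s₁ t₂) * E / M₂ then P s₁ s₂ else 0))
        ≤ ∑ s₁, (∑ t₂, P s₁ t₂) * E := Finset.sum_le_sum fun s₁ _ => hinner s₁
      _ = (∑ s₁, ∑ t₂, P s₁ t₂) * E := by rw [Finset.sum_mul]
      _ = 1 * E := by rw [hP1]
      _ = E := one_mul E
  -- combine
  have hmain : (∑ s₁, ∑ s₂, P s₁ s₂ *
        (if P s₁ s₂ ≤ E / (M₁ * M₂) ∨
            P s₁ s₂ ≤ (∑ t₁, P t₁ s₂) * E / M₁ ∨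
            P s₁ s₂ ≤ (∑ t₂, P s₁ t₂) * E / M₂ then (1:ℝ) else 0))
      ≤ (∑ s₁, ∑ s₂, P s₁ s₂ * (if g (f₁ s₁) (f₂ s₂) ≠ (s₁, s₂) then (1:ℝ) else 0))
        + ((∑ s₁, ∑ s₂, (if g (f₁ s₁) (f₂ s₂) = (s₁, s₂) ∧ P s₁ s₂ ≤ E / (M₁ * M₂)
            then P s₁ s₂ else 0))
          + (∑ s₁, ∑ s₂, (if g (f₁ s₁) (f₂ s₂) = (s₁, s₂) ∧
              P s₁ s₂ ≤ (∑ t₁, P t₁ s₂) * E / M₁ then P s₁ s₂ else 0))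
          + (∑ s₁, ∑ s₂, (if g (f₁ s₁) (f₂ s₂) = (s₁, s₂) ∧
              P s₁ s₂ ≤ (∑ t₂, P s₁ t₂) * E / M₂ then P s₁ s₂ else 0))) := by
    have := Finset.sum_le_sum (s := (Finset.univ : Finset S₁)) (fun s₁ _ =>
      Finset.sum_le_sum (s := (Finset.univ : Finset S₂)) (fun s₂ _ => key s₁ s₂))
    calc _ ≤ _ := this
      _ = _ := by
        simp only [Finset.sum_add_distrib]
        ring
  linarith [hA, hB, hC, hmain]
end

section
/- Improvement on the Miyake–Kanaya converse: Let S₁, S₂ be nonempty finite sets, P a probability mass function on S₁ × S₂ with marginals P₁, P₂, M₁, M₂ positive integers, and β > 0. For every Slepian–Wolf code (f₁, f₂, g), the error probability satisfies ∑_{s₁,s₂} P(s₁,s₂)·𝟙{g(f₁(s₁),f₂(s₂)) ≠ (s₁,s₂)} ≥ ∑_{s₁,s₂} P(s₁,s₂)·𝟙{P(s₁,s₂) ≤ exp(−β)/(M₁M₂) or P(s₁,s₂) ≤ P₂(s₂)exp(−β)/M₁ or P(s₁,s₂) ≤ P₁(s₁)exp(−β)/M₂} + ∑_{s₁,s₂}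 max{exp(−β)/(M₁M₂), P₂(s₂)exp(−β)/M₁, P₁(s₁)exp(−β)/M₂} · 𝟙{P(s₁,s₂) > exp(−β)/(M₁M₂) and P(s₁,s₂) > P₂(s₂)exp(−β)/M₁ and P(s₁,s₂) > P₁(s₁)exp(−β)/M₂} − 3·exp(−β). -/
open Finset
open scoped Classical

theorem improved_miyake_kanaya_converse
    {S₁ S₂ : Type*} [Fintype S₁] [Fintype S₂] [Nonempty S₁] [Nonempty S₂]
    [DecidableEq S₁] [DecidableEq S₂]
    (P : S₁ → S₂ → ℝ) (hP0 : ∀ s₁ s₂, 0 ≤ P s₁ s₂) (hP1 : ∑ s₁, ∑ s₂, P s₁ s₂ = 1)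
    (M₁ M₂ : ℕ) (hM₁ : 0 < M₁) (hM₂ : 0 < M₂)
    (β : ℝ) (hβ : 0 < β)
    (f₁ : S₁ → Fin M₁) (f₂ : S₂ → Fin M₂) (g : Fin M₁ → Fin M₂ → S₁ × S₂) :
    ∑ s₁, ∑ s₂, P s₁ s₂ * (if g (f₁ s₁) (f₂ s₂) ≠ (s₁, s₂) then (1:ℝ) else 0) ≥
      (∑ s₁, ∑ s₂, P s₁ s₂ *
        (if P s₁ s₂ ≤ Real.exp (-β) / (M₁ * M₂) ∨
            P s₁ s₂ ≤ (∑ t₁, P t₁ s₂) * Real.exp (-β) / M₁ ∨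
            P s₁ s₂ ≤ (∑ t₂, P s₁ t₂) * Real.exp (-β) / M₂
          then (1:ℝ) else 0)) +
      (∑ s₁, ∑ s₂,
        max (Real.exp (-β) / (M₁ * M₂))
          (max ((∑ t₁, P t₁ s₂) * Real.exp (-β) / M₁)
            ((∑ t₂, P s₁ t₂) * Real.exp (-β) / M₂)) *
        (if Real.exp (-β) / (M₁ * M₂) < P s₁ s₂ ∧
            (∑ t₁, P t₁ s₂) * Real.exp (-β) / M₁ < P s₁ s₂ ∧
            (∑ t₂, P s₁ t₂) * Real.exp (-β) / M₂ < P s₁ s₂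
          then (1:ℝ) else 0)) - 3 * Real.exp (-β) := by
  classical
  have he0 : (0:ℝ) < Real.exp (-β) := Real.exp_pos _
  have hM₁' : (0:ℝ) < M₁ := by exact_mod_cast hM₁
  have hM₂' : (0:ℝ) < M₂ := by exact_mod_cast hM₂
  have ha0 : (0:ℝ) ≤ Real.exp (-β) / (M₁ * M₂) := by positivity
  have hb0 : ∀ s₂ : S₂, (0:ℝ) ≤ (∑ t₁, P t₁ s₂) * Real.exp (-β) / M₁ := by
    intro s₂
    have h : (0:ℝ) ≤ ∑ t₁, P t₁ s₂ := Finset.sum_nonneg fun t₁ _ => hP0 t₁ s₂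
    positivity
  have hc0 : ∀ s₁ : S₁, (0:ℝ) ≤ (∑ t₂, P s₁ t₂) * Real.exp (-β) / M₂ := by
    intro s₁
    have h : (0:ℝ) ≤ ∑ t₂, P s₁ t₂ := Finset.sum_nonneg fun t₂ _ => hP0 s₁ t₂
    positivity
  -- counting: per s₂ at most M₁ correct s₁'s
  have hcount1 : ∀ s₂ : S₂,
      (∑ s₁, (if g (f₁ s₁) (f₂ s₂) = (s₁, s₂) then (1:ℝ) else 0)) ≤ (M₁ : ℝ) := by
    intro s₂
    rw [Finset.sum_boole]
    have hc : (Finset.univ.filter fun s₁ => g (f₁ s₁) (f₂ s₂) = (s₁, s₂)).card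
        ≤ (Finset.univ : Finset (Fin M₁)).card := by
      apply Finset.card_le_card_of_injOn f₁ (fun _ _ => Finset.mem_univ _)
      intro x hx y hy hxy
      simp only [Finset.coe_filter, Set.mem_setOf_eq, Finset.mem_univ, true_and] at hx hy
      have hx' : (x, s₂) = (y, s₂) := by rw [← hx, ← hy, hxy]
      exact (Prod.mk.injEq _ _ _ _ ▸ hx').1
    have : (Finset.univ.filter fun s₁ => g (f₁ s₁) (f₂ s₂) = (s₁, s₂)).card ≤ M₁ := by
      simpa using hc
    exact_mod_cast this
  have hcount2 : ∀ s₁ : S₁,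
      (∑ s₂, (if g (f₁ s₁) (f₂ s₂) = (s₁, s₂) then (1:ℝ) else 0)) ≤ (M₂ : ℝ) := by
    intro s₁
    rw [Finset.sum_boole]
    have hc : (Finset.univ.filter fun s₂ => g (f₁ s₁) (f₂ s₂) = (s₁, s₂)).card
        ≤ (Finset.univ : Finset (Fin M₂)).card := by
      apply Finset.card_le_card_of_injOn f₂ (fun _ _ => Finset.mem_univ _)
      intro x hx y hy hxy
      simp only [Finset.coe_filter, Set.mem_setOf_eq, Finset.mem_univ, true_and] at hx hy
      have hx' : (s₁, x) = (s₁, y) := by rw [← hx, ← hy, hxy]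
      exact (Prod.mk.injEq _ _ _ _ ▸ hx').2
    have : (Finset.univ.filter fun s₂ => g (f₁ s₁) (f₂ s₂) = (s₁, s₂)).card ≤ M₂ := by
      simpa using hc
    exact_mod_cast this
  -- total count ≤ M₁ M₂
  have hcount0 : (∑ s₁, ∑ s₂, (if g (f₁ s₁) (f₂ s₂) = (s₁, s₂) then (1:ℝ) else 0))
      ≤ (M₁ : ℝ) * M₂ := by
    have heq : (∑ s₁, ∑ s₂, (if g (f₁ s₁) (f₂ s₂) = (s₁, s₂) then (1:ℝ) else 0))
        = ∑ p : S₁ × S₂, (if g (f₁ p.1) (f₂ p.2) = p then (1:ℝ) else 0) :=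
      (Fintype.sum_prod_type (f := fun p : S₁ × S₂ =>
        if g (f₁ p.1) (f₂ p.2) = p then (1:ℝ) else 0)).symm
    rw [heq, Finset.sum_boole]
    have hc : (Finset.univ.filter fun p : S₁ × S₂ => g (f₁ p.1) (f₂ p.2) = p).card
        ≤ (Finset.univ : Finset (Fin M₁ × Fin M₂)).card := by
      apply Finset.card_le_card_of_injOn (fun p : S₁ × S₂ => (f₁ p.1, f₂ p.2))
        (fun _ _ => Finset.mem_univ _)
      intro x hx y hy hxy
      simp only [Finset.coe_filter, Set.mem_setOf_eq, Finset.mem_univ, true_and] at hx hy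
      have h1 : f₁ x.1 = f₁ y.1 := congrArg Prod.fst hxy
      have h2 : f₂ x.2 = f₂ y.2 := congrArg Prod.snd hxy
      calc x = g (f₁ x.1) (f₂ x.2) := hx.symm
        _ = g (f₁ y.1) (f₂ y.2) := by rw [h1, h2]
        _ = y := hy
    have : (Finset.univ.filter fun p : S₁ × S₂ => g (f₁ p.1) (f₂ p.2) = p).card ≤ M₁ * M₂ := by
      simpa using hc
    calc ((Finset.univ.filter fun p : S₁ × S₂ => g (f₁ p.1) (f₂ p.2) = p).card : ℝ)
        ≤ ((M₁ * M₂ : ℕ) : ℝ) := by exact_mod_cast this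
      _ = (M₁ : ℝ) * M₂ := by push_cast; ring
  -- bound on ∑∑ max * χCor ≤ 3 exp(-β)
  have h3 : (∑ s₁, ∑ s₂,
      max (Real.exp (-β) / (M₁ * M₂))
        (max ((∑ t₁, P t₁ s₂) * Real.exp (-β) / M₁)
          ((∑ t₂, P s₁ t₂) * Real.exp (-β) / M₂)) *
      (if g (f₁ s₁) (f₂ s₂) = (s₁, s₂) then (1:ℝ) else 0)) ≤ 3 * Real.exp (-β) := by
    have hpt : ∀ s₁ s₂,
        max (Real.exp (-β) / (M₁ * M₂))
          (max ((∑ t₁, P t₁ s₂) * Real.exp (-β) / M₁)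
            ((∑ t₂, P s₁ t₂) * Real.exp (-β) / M₂)) *
        (if g (f₁ s₁) (f₂ s₂) = (s₁, s₂) then (1:ℝ) else 0)
        ≤ (Real.exp (-β) / (M₁ * M₂)) * (if g (f₁ s₁) (f₂ s₂) = (s₁, s₂) then (1:ℝ) else 0)
          + ((∑ t₁, P t₁ s₂) * Real.exp (-β) / M₁) * (if g (f₁ s₁) (f₂ s₂) = (s₁, s₂) then (1:ℝ) else 0)
          + ((∑ t₂, P s₁ t₂) * Real.exp (-β) / M₂) * (if g (f₁ s₁) (f₂ s₂) = (s₁, s₂) then (1:ℝ) else 0) := by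
      intro s₁ s₂
      have hm : max (Real.exp (-β) / (M₁ * M₂))
          (max ((∑ t₁, P t₁ s₂) * Real.exp (-β) / M₁)
            ((∑ t₂, P s₁ t₂) * Real.exp (-β) / M₂))
          ≤ (Real.exp (-β) / (M₁ * M₂)) + ((∑ t₁, P t₁ s₂) * Real.exp (-β) / M₁)
            + ((∑ t₂, P s₁ t₂) * Real.exp (-β) / M₂) := by
        apply max_le
        · have := hb0 s₂; have := hc0 s₁; linarith
        · apply max_le
          · have := ha0; have := hc0 s₁; linarith
          · have := ha0; have := hb0 s₂; linarith
      by_cases h : g (f₁ s₁) (f₂ s₂) = (s₁, s₂)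
      · simp only [h, if_pos, mul_one]; linarith
      · simp [h]
    have hstep1 : (∑ s₁, ∑ s₂,
          max (Real.exp (-β) / (M₁ * M₂))
            (max ((∑ t₁, P t₁ s₂) * Real.exp (-β) / M₁)
              ((∑ t₂, P s₁ t₂) * Real.exp (-β) / M₂)) *
          (if g (f₁ s₁) (f₂ s₂) = (s₁, s₂) then (1:ℝ) else 0))
        ≤ ∑ s₁, ∑ s₂,
          ((Real.exp (-β) / (M₁ * M₂)) * (if g (f₁ s₁) (f₂ s₂) = (s₁, s₂) then (1:ℝ) else 0)
          + ((∑ t₁, P t₁ s₂) * Real.exp (-β) / M₁) * (if g (f₁ s₁) (f₂ s₂) = (s₁, s₂) then (1:ℝ) else 0)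
          + ((∑ t₂, P s₁ t₂) * Real.exp (-β) / M₂) * (if g (f₁ s₁) (f₂ s₂) = (s₁, s₂) then (1:ℝ) else 0)) :=
      Finset.sum_le_sum fun s₁ _ => Finset.sum_le_sum fun s₂ _ => hpt s₁ s₂
    have hstep2 : (∑ s₁, ∑ s₂,
          ((Real.exp (-β) / (M₁ * M₂)) * (if g (f₁ s₁) (f₂ s₂) = (s₁, s₂) then (1:ℝ) else 0)
          + ((∑ t₁, P t₁ s₂) * Real.exp (-β) / M₁) * (if g (f₁ s₁) (f₂ s₂) = (s₁, s₂) then (1:ℝ) else 0)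
          + ((∑ t₂, P s₁ t₂) * Real.exp (-β) / M₂) * (if g (f₁ s₁) (f₂ s₂) = (s₁, s₂) then (1:ℝ) else 0)))
        = (∑ s₁, ∑ s₂, (Real.exp (-β) / (M₁ * M₂)) * (if g (f₁ s₁) (f₂ s₂) = (s₁, s₂) then (1:ℝ) else 0))
          + (∑ s₁, ∑ s₂, ((∑ t₁, P t₁ s₂) * Real.exp (-β) / M₁) * (if g (f₁ s₁) (f₂ s₂) = (s₁, s₂) then (1:ℝ) else 0))
          + (∑ s₁, ∑ s₂, ((∑ t₂, P s₁ t₂) * Real.exp (-β) / M₂) * (if g (f₁ s₁) (f₂ s₂) = (s₁, s₂) then (1:ℝ) else 0)) := by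
      simp_rw [Finset.sum_add_distrib]
    have ht1 : (∑ s₁, ∑ s₂, (Real.exp (-β) / (M₁ * M₂)) * (if g (f₁ s₁) (f₂ s₂) = (s₁, s₂) then (1:ℝ) else 0))
        ≤ Real.exp (-β) := by
      have : (∑ s₁, ∑ s₂, (Real.exp (-β) / (M₁ * M₂)) * (if g (f₁ s₁) (f₂ s₂) = (s₁, s₂) then (1:ℝ) else 0))
              = (Real.exp (-β) / (M₁ * M₂)) * (∑ s₁, ∑ s₂, (if g (f₁ s₁) (f₂ s₂) = (s₁, s₂) then (1:ℝ) else 0)) := by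
            simp_rw [Finset.mul_sum]
      rw [this]
      calc (Real.exp (-β) / (M₁ * M₂)) * (∑ s₁, ∑ s₂, (if g (f₁ s₁) (f₂ s₂) = (s₁, s₂) then (1:ℝ) else 0))
          ≤ (Real.exp (-β) / (M₁ * M₂)) * ((M₁ : ℝ) * M₂) :=
            mul_le_mul_of_nonneg_left hcount0 ha0
        _ = Real.exp (-β) := by field_simp
    have ht2 : (∑ s₁, ∑ s₂, ((∑ t₁, P t₁ s₂) * Real.exp (-β) / M₁) * (if g (f₁ s₁) (f₂ s₂) = (s₁, s₂) then (1:ℝ) else 0))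
        ≤ Real.exp (-β) := by
      have hsw : (∑ s₁, ∑ s₂, ((∑ t₁, P t₁ s₂) * Real.exp (-β) / M₁) * (if g (f₁ s₁) (f₂ s₂) = (s₁, s₂) then (1:ℝ) else 0))
              = ∑ s₂, ((∑ t₁, P t₁ s₂) * Real.exp (-β) / M₁) * (∑ s₁, (if g (f₁ s₁) (f₂ s₂) = (s₁, s₂) then (1:ℝ) else 0)) := by
            rw [Finset.sum_comm]
            simp_rw [Finset.mul_sum]
      rw [hsw]
      calc (∑ s₂, ((∑ t₁, P t₁ s₂) * Real.exp (-β) / M₁) * (∑ s₁, (if g (f₁ s₁) (f₂ s₂) = (s₁, s₂) then (1:ℝ) else 0)))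
          ≤ ∑ s₂, ((∑ t₁, P t₁ s₂) * Real.exp (-β) / M₁) * (M₁ : ℝ) :=
            Finset.sum_le_sum fun s₂ _ => mul_le_mul_of_nonneg_left (hcount1 s₂) (hb0 s₂)
        _ = ∑ s₂, (∑ t₁, P t₁ s₂) * Real.exp (-β) := by
            refine Finset.sum_congr rfl fun s₂ _ => ?_
            field_simp
        _ = (∑ s₂, ∑ t₁, P t₁ s₂) * Real.exp (-β) := by rw [Finset.sum_mul]
        _ = Real.exp (-β) := by rw [Finset.sum_comm, hP1, one_mul]
    have ht3 : (∑ s₁, ∑ s₂, ((∑ t₂, P s₁ t₂) * Real.exp (-β) / M₂) * (if g (f₁ s₁) (f₂ s₂) = (s₁, s₂) then (1:ℝ) else 0))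
        ≤ Real.exp (-β) := by
      have hsw : (∑ s₁, ∑ s₂, ((∑ t₂, P s₁ t₂) * Real.exp (-β) / M₂) * (if g (f₁ s₁) (f₂ s₂) = (s₁, s₂) then (1:ℝ) else 0))
              = ∑ s₁, ((∑ t₂, P s₁ t₂) * Real.exp (-β) / M₂) * (∑ s₂, (if g (f₁ s₁) (f₂ s₂) = (s₁, s₂) then (1:ℝ) else 0)) := by
            simp_rw [Finset.mul_sum]
      rw [hsw]
      calc (∑ s₁, ((∑ t₂, P s₁ t₂) * Real.exp (-β) / M₂) * (∑ s₂, (if g (f₁ s₁) (f₂ s₂) = (s₁, s₂) then (1:ℝ) else 0)))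
          ≤ ∑ s₁, ((∑ t₂, P s₁ t₂) * Real.exp (-β) / M₂) * (M₂ : ℝ) :=
            Finset.sum_le_sum fun s₁ _ => mul_le_mul_of_nonneg_left (hcount2 s₁) (hc0 s₁)
        _ = ∑ s₁, (∑ t₂, P s₁ t₂) * Real.exp (-β) := by
            refine Finset.sum_congr rfl fun s₁ _ => ?_
            field_simp
        _ = (∑ s₁, ∑ t₂, P s₁ t₂) * Real.exp (-β) := by rw [Finset.sum_mul]
        _ = Real.exp (-β) := by rw [hP1, one_mul]
    linarith [hstep1, hstep2, ht1, ht2, ht3]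
  -- error probability = 1 - ∑∑ P χCor
  have hLHS : (∑ s₁, ∑ s₂, P s₁ s₂ * (if g (f₁ s₁) (f₂ s₂) ≠ (s₁, s₂) then (1:ℝ) else 0))
      = 1 - ∑ s₁, ∑ s₂, P s₁ s₂ * (if g (f₁ s₁) (f₂ s₂) = (s₁, s₂) then (1:ℝ) else 0) := by
    have hpt : ∀ s₁ s₂, P s₁ s₂ * (if g (f₁ s₁) (f₂ s₂) ≠ (s₁, s₂) then (1:ℝ) else 0)
        = P s₁ s₂ - P s₁ s₂ * (if g (f₁ s₁) (f₂ s₂) = (s₁, s₂) then (1:ℝ) else 0) := by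
      intro s₁ s₂; by_cases h : g (f₁ s₁) (f₂ s₂) = (s₁, s₂) <;> simp [h]
    simp_rw [hpt, Finset.sum_sub_distrib, hP1]
  -- the "at least one threshold" sum = 1 - ∑∑ P χ¬Cnd
  have hA : (∑ s₁, ∑ s₂, P s₁ s₂ *
        (if P s₁ s₂ ≤ Real.exp (-β) / (M₁ * M₂) ∨
            P s₁ s₂ ≤ (∑ t₁, P t₁ s₂) * Real.exp (-β) / M₁ ∨
            P s₁ s₂ ≤ (∑ t₂, P s₁ t₂) * Real.exp (-β) / M₂
          then (1:ℝ) else 0))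
      = 1 - ∑ s₁, ∑ s₂, P s₁ s₂ *
        (if Real.exp (-β) / (M₁ * M₂) < P s₁ s₂ ∧
            (∑ t₁, P t₁ s₂) * Real.exp (-β) / M₁ < P s₁ s₂ ∧
            (∑ t₂, P s₁ t₂) * Real.exp (-β) / M₂ < P s₁ s₂
          then (1:ℝ) else 0) := by
    have hpt : ∀ s₁ s₂, P s₁ s₂ *
        (if P s₁ s₂ ≤ Real.exp (-β) / (M₁ * M₂) ∨
            P s₁ s₂ ≤ (∑ t₁, P t₁ s₂) * Real.exp (-β) / M₁ ∨
            P s₁ s₂ ≤ (∑ t₂, P s₁ t₂) * Real.exp (-β) / M₂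
          then (1:ℝ) else 0)
        = P s₁ s₂ - P s₁ s₂ *
        (if Real.exp (-β) / (M₁ * M₂) < P s₁ s₂ ∧
            (∑ t₁, P t₁ s₂) * Real.exp (-β) / M₁ < P s₁ s₂ ∧
            (∑ t₂, P s₁ t₂) * Real.exp (-β) / M₂ < P s₁ s₂
          then (1:ℝ) else 0) := by
      intro s₁ s₂
      by_cases h : Real.exp (-β) / (M₁ * M₂) < P s₁ s₂ ∧
          (∑ t₁, P t₁ s₂) * Real.exp (-β) / M₁ < P s₁ s₂ ∧
          (∑ t₂, P s₁ t₂) * Real.exp (-β) / M₂ < P s₁ s₂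
      · have h' : ¬ (P s₁ s₂ ≤ Real.exp (-β) / (M₁ * M₂) ∨
            P s₁ s₂ ≤ (∑ t₁, P t₁ s₂) * Real.exp (-β) / M₁ ∨
            P s₁ s₂ ≤ (∑ t₂, P s₁ t₂) * Real.exp (-β) / M₂) := by
          push_neg; exact h
        simp [h, h']
      · have h' : P s₁ s₂ ≤ Real.exp (-β) / (M₁ * M₂) ∨
            P s₁ s₂ ≤ (∑ t₁, P t₁ s₂) * Real.exp (-β) / M₁ ∨
            P s₁ s₂ ≤ (∑ t₂, P s₁ t₂) * Real.exp (-β) / M₂ := by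
          by_contra hc; push_neg at hc; exact h hc
        simp [h, h']
    simp_rw [hpt, Finset.sum_sub_distrib, hP1]
  -- key pointwise bound
  have hkey : ∀ s₁ s₂, P s₁ s₂ * (if g (f₁ s₁) (f₂ s₂) = (s₁, s₂) then (1:ℝ) else 0)
      ≤ max (Real.exp (-β) / (M₁ * M₂))
          (max ((∑ t₁, P t₁ s₂) * Real.exp (-β) / M₁)
            ((∑ t₂, P s₁ t₂) * Real.exp (-β) / M₂)) *
          (if g (f₁ s₁) (f₂ s₂) = (s₁, s₂) then (1:ℝ) else 0)
        + (P s₁ s₂ - max (Real.exp (-β) / (M₁ * M₂))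
          (max ((∑ t₁, P t₁ s₂) * Real.exp (-β) / M₁)
            ((∑ t₂, P s₁ t₂) * Real.exp (-β) / M₂))) *
          (if Real.exp (-β) / (M₁ * M₂) < P s₁ s₂ ∧
            (∑ t₁, P t₁ s₂) * Real.exp (-β) / M₁ < P s₁ s₂ ∧
            (∑ t₂, P s₁ t₂) * Real.exp (-β) / M₂ < P s₁ s₂
          then (1:ℝ) else 0) := by
    intro s₁ s₂
    by_cases hn : Real.exp (-β) / (M₁ * M₂) < P s₁ s₂ ∧
        (∑ t₁, P t₁ s₂) * Real.exp (-β) / M₁ < P s₁ s₂ ∧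
        (∑ t₂, P s₁ t₂) * Real.exp (-β) / M₂ < P s₁ s₂
    · have hm : max (Real.exp (-β) / (M₁ * M₂))
          (max ((∑ t₁, P t₁ s₂) * Real.exp (-β) / M₁)
            ((∑ t₂, P s₁ t₂) * Real.exp (-β) / M₂)) < P s₁ s₂ :=
        max_lt hn.1 (max_lt hn.2.1 hn.2.2)
      by_cases hc : g (f₁ s₁) (f₂ s₂) = (s₁, s₂)
      · rw [if_pos hc, if_pos hn]
        simp only [mul_one]; linarith
      · rw [if_neg hc, if_pos hn]
        simp only [mul_zero, mul_one, zero_add]; linarith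
    · have h' : P s₁ s₂ ≤ Real.exp (-β) / (M₁ * M₂) ∨
          P s₁ s₂ ≤ (∑ t₁, P t₁ s₂) * Real.exp (-β) / M₁ ∨
          P s₁ s₂ ≤ (∑ t₂, P s₁ t₂) * Real.exp (-β) / M₂ := by
        by_contra hcc; push_neg at hcc; exact hn hcc
      have hm : P s₁ s₂ ≤ max (Real.exp (-β) / (M₁ * M₂))
          (max ((∑ t₁, P t₁ s₂) * Real.exp (-β) / M₁)
            ((∑ t₂, P s₁ t₂) * Real.exp (-β) / M₂)) := by
        rcases h' with h | h | h
        · exact h.trans (le_max_left _ _)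
        · exact h.trans ((le_max_left _ _).trans (le_max_right _ _))
        · exact h.trans ((le_max_right _ _).trans (le_max_right _ _))
      by_cases hc : g (f₁ s₁) (f₂ s₂) = (s₁, s₂)
      · rw [if_pos hc, if_neg hn]
        simp only [mul_one, mul_zero, add_zero]; exact hm
      · rw [if_neg hc, if_neg hn]
        simp only [mul_zero, add_zero, le_refl]
  -- sum the pointwise bound
  have hX : (∑ s₁, ∑ s₂, P s₁ s₂ * (if g (f₁ s₁) (f₂ s₂) = (s₁, s₂) then (1:ℝ) else 0))
      ≤ 3 * Real.exp (-β)
        + ((∑ s₁, ∑ s₂, P s₁ s₂ *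
            (if Real.exp (-β) / (M₁ * M₂) < P s₁ s₂ ∧
              (∑ t₁, P t₁ s₂) * Real.exp (-β) / M₁ < P s₁ s₂ ∧
              (∑ t₂, P s₁ t₂) * Real.exp (-β) / M₂ < P s₁ s₂
            then (1:ℝ) else 0))
          - (∑ s₁, ∑ s₂,
            max (Real.exp (-β) / (M₁ * M₂))
              (max ((∑ t₁, P t₁ s₂) * Real.exp (-β) / M₁)
                ((∑ t₂, P s₁ t₂) * Real.exp (-β) / M₂)) *
            (if Real.exp (-β) / (M₁ * M₂) < P s₁ s₂ ∧
              (∑ t₁, P t₁ s₂) * Real.exp (-β) / M₁ < P s₁ s₂ ∧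
              (∑ t₂, P s₁ t₂) * Real.exp (-β) / M₂ < P s₁ s₂
            then (1:ℝ) else 0))) := by
    have hsum : (∑ s₁, ∑ s₂, P s₁ s₂ * (if g (f₁ s₁) (f₂ s₂) = (s₁, s₂) then (1:ℝ) else 0))
        ≤ (∑ s₁, ∑ s₂,
            (max (Real.exp (-β) / (M₁ * M₂))
              (max ((∑ t₁, P t₁ s₂) * Real.exp (-β) / M₁)
                ((∑ t₂, P s₁ t₂) * Real.exp (-β) / M₂)) *
              (if g (f₁ s₁) (f₂ s₂) = (s₁, s₂) then (1:ℝ) else 0)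
            + (P s₁ s₂ - max (Real.exp (-β) / (M₁ * M₂))
              (max ((∑ t₁, P t₁ s₂) * Real.exp (-β) / M₁)
                ((∑ t₂, P s₁ t₂) * Real.exp (-β) / M₂))) *
              (if Real.exp (-β) / (M₁ * M₂) < P s₁ s₂ ∧
                (∑ t₁, P t₁ s₂) * Real.exp (-β) / M₁ < P s₁ s₂ ∧
                (∑ t₂, P s₁ t₂) * Real.exp (-β) / M₂ < P s₁ s₂
              then (1:ℝ) else 0))) := by
      apply Finset.sum_le_sum; intro s₁ _
      apply Finset.sum_le_sum; intro s₂ _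
      exact hkey s₁ s₂
    have hsplit : (∑ s₁, ∑ s₂,
            (max (Real.exp (-β) / (M₁ * M₂))
              (max ((∑ t₁, P t₁ s₂) * Real.exp (-β) / M₁)
                ((∑ t₂, P s₁ t₂) * Real.exp (-β) / M₂)) *
              (if g (f₁ s₁) (f₂ s₂) = (s₁, s₂) then (1:ℝ) else 0)
            + (P s₁ s₂ - max (Real.exp (-β) / (M₁ * M₂))
              (max ((∑ t₁, P t₁ s₂) * Real.exp (-β) / M₁)
                ((∑ t₂, P s₁ t₂) * Real.exp (-β) / M₂))) *
              (if Real.exp (-β) / (M₁ * M₂) < P s₁ s₂ ∧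
                (∑ t₁, P t₁ s₂) * Real.exp (-β) / M₁ < P s₁ s₂ ∧
                (∑ t₂, P s₁ t₂) * Real.exp (-β) / M₂ < P s₁ s₂
              then (1:ℝ) else 0)))
        = (∑ s₁, ∑ s₂,
            max (Real.exp (-β) / (M₁ * M₂))
              (max ((∑ t₁, P t₁ s₂) * Real.exp (-β) / M₁)
                ((∑ t₂, P s₁ t₂) * Real.exp (-β) / M₂)) *
              (if g (f₁ s₁) (f₂ s₂) = (s₁, s₂) then (1:ℝ) else 0))
          + ((∑ s₁, ∑ s₂, P s₁ s₂ *
              (if Real.exp (-β) / (M₁ * M₂) < P s₁ s₂ ∧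
                (∑ t₁, P t₁ s₂) * Real.exp (-β) / M₁ < P s₁ s₂ ∧
                (∑ t₂, P s₁ t₂) * Real.exp (-β) / M₂ < P s₁ s₂
              then (1:ℝ) else 0))
            - (∑ s₁, ∑ s₂,
              max (Real.exp (-β) / (M₁ * M₂))
                (max ((∑ t₁, P t₁ s₂) * Real.exp (-β) / M₁)
                  ((∑ t₂, P s₁ t₂) * Real.exp (-β) / M₂)) *
              (if Real.exp (-β) / (M₁ * M₂) < P s₁ s₂ ∧
                (∑ t₁, P t₁ s₂) * Real.exp (-β) / M₁ < P s₁ s₂ ∧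
                (∑ t₂, P s₁ t₂) * Real.exp (-β) / M₂ < P s₁ s₂
              then (1:ℝ) else 0))) := by
      simp_rw [sub_mul, Finset.sum_add_distrib, Finset.sum_sub_distrib]
    rw [hsplit] at hsum
    linarith [hsum, h3]
  rw [ge_iff_le, hLHS, hA]
  linarith [hX]
end

section
/- Slepian–Wolf metaconverse for a doubly symmetric binary source: Fix n ≥ 1, 0 < p < 1/2, positive integers M₁, M₂, and β > 0. Let S₁ = S₂ = {0,1}ⁿ and P(s₁,s₂) = 2^{−n}·p^{d(s₁,s₂)}·(1−p)^{n−d(s₁,s₂)}, where d(·,·) is the Hamming distance. Then for every Slepian–Wolf code (f₁ : {0,1}ⁿ → Fin M₁, f₂ : {0,1}ⁿ → Fin M₂, g : Fin M₁ × Fin M₂ → {0,1}ⁿ × {0,1}ⁿ), the error probability satisfies: error ≥ ∑_{k=0}^{n} C(n,k) · min{ p^k(1−p)^{n−k}, 2^{−β}/M₁ + 2^{−β}/M₂ + 2^{n−β}/(M₁M₂) } − M₁·2ⁿ·max_{0≤k≤n} min{ p^k(1−p)^{n−k}/2ⁿ, 2^{−β}/(2ⁿM₁) } − M₂·2ⁿ·max_{0≤k≤n}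 min{ p^k(1−p)^{n−k}/2ⁿ, 2^{−β}/(2ⁿM₂) } − M₁M₂·max_{0≤k≤n} min{ p^k(1−p)^{n−k}/2ⁿ, 2^{−β}/(M₁M₂) }, where C(n,k) is the binomial coefficient. -/
/-!
Call a source pair correct if the code decodes it. The error probability is at least the mass
of min(P, c₁ + c₂ + c₃) outside the correct set, and on the correct set this clipped mass splits
into the three masses of min(P, cᵢ). Each of these is bounded by counting correct pairs: for a
fixed second source word at most M₁ first words are correct (f₁ must separate them), for a fixed
first word at most M₂, and at most M₁M₂ in all. The total clipped mass is evaluated by grouping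
s₂ by its Hamming distance from s₁, a Hamming sphere of radius k having C(n,k) points.
-/

open Finset
open scoped Classical

theorem min_add_le_min_add_min {α : Type*} [AddCommMonoid α] [LinearOrder α] [IsOrderedAddMonoid α]
    {x u v : α} (hx : 0 ≤ x) (hu : 0 ≤ u) (hv : 0 ≤ v) :
    min x (u + v) ≤ min x u + min x v := by
  rcases le_total x u with hxu | hux
  · rw [min_eq_left hxu]
    exact (min_le_left _ _).trans (le_add_of_nonneg_right (le_min hx hv))
  rcases le_total x v with hxv | hvx
  · rw [min_eq_left hxv]
    exact (min_le_left _ _).trans (le_add_of_nonneg_left (le_min hx hu))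
  · rw [min_eq_right hux, min_eq_right hvx]
    exact min_le_right _ _

theorem filter_ne_ite_add_one {ι : Type*} [Fintype ι] [DecidableEq ι] (x : ι → Fin 2)
    (t : Finset ι) :
    ({i | x i ≠ if i ∈ t then x i + 1 else x i} : Finset ι) = t := by
  ext i
  by_cases hi : i ∈ t <;> simp [hi]

theorem card_filter_hammingDist_eq_choose {ι : Type*} [Fintype ι] [DecidableEq ι]
    (x : ι → Fin 2) (k : ℕ) :
    #{y | hammingDist x y = k} = (Fintype.card ι).choose k := by
  rw [← card_univ, ← card_powersetCard]
  refine card_nbij' (fun y => ({i | x i ≠ y i} : Finset ι))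
    (fun t i => if i ∈ t then x i + 1 else x i)
    (fun y hy => ?_) (fun t ht => ?_) (fun y _ => ?_) (fun t _ => filter_ne_ite_add_one x t)
  · simp_all [hammingDist]
  · simp_all [hammingDist]
  · funext i
    by_cases h : x i = y i
    · simp [h]
    · simp only [mem_filter, mem_univ, true_and, if_pos h]
      exact (by decide : ∀ a b : Fin 2, a ≠ b → a + 1 = b) _ _ h

theorem sum_hammingDist_eq_sum_choose {ι M : Type*} [Fintype ι] [DecidableEq ι] [AddCommMonoid M]
    (x : ι → Fin 2) (F : ℕ → M) :
    ∑ y, F (hammingDist x y) =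
      ∑ k ∈ range (Fintype.card ι + 1), (Fintype.card ι).choose k • F k := by
  rw [← sum_fiberwise_of_maps_to (t := range (Fintype.card ι + 1)) (g := hammingDist x)
    (fun y _ => mem_range_succ_iff.2 hammingDist_le_card_fintype)]
  refine sum_congr rfl fun k _ => ?_
  rw [sum_congr rfl fun y hy => by rw [(mem_filter.1 hy).2], sum_const,
    card_filter_hammingDist_eq_choose]

theorem sum_le_card_mul_of_injOn {α β R : Type*} [Fintype β] [Semiring R] [PartialOrder R]
    [IsOrderedRing R] {s : Finset α} {f : α → β} (hf : Set.InjOn f s) {φ : α → R} {B : R}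
    (hφ : ∀ x ∈ s, φ x ≤ B) (hB : 0 ≤ B) :
    ∑ x ∈ s, φ x ≤ Fintype.card β * B :=
  calc ∑ x ∈ s, φ x ≤ #s • B := sum_le_card_nsmul s φ B hφ
    _ = #s * B := nsmul_eq_mul _ _
    _ ≤ Fintype.card β * B := by
      gcongr
      exact card_le_card_of_injOn f (fun _ _ => mem_univ _) hf

namespace SlepianWolf

variable {X₁ X₂ A₁ A₂ : Type*} [Fintype X₁] [Fintype X₂] [DecidableEq X₁] [DecidableEq X₂]
  (f₁ : X₁ → A₁) (f₂ : X₂ → A₂) (g : A₁ → A₂ → X₁ × X₂)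

def correct : Finset (X₁ × X₂) := {x | g (f₁ x.1) (f₂ x.2) = x}

def error (P : X₁ → X₂ → ℝ) : ℝ :=
  ∑ x₁, ∑ x₂, P x₁ x₂ * if g (f₁ x₁) (f₂ x₂) ≠ (x₁, x₂) then 1 else 0

variable {f₁ f₂ g}

theorem eq_of_mem_correct {x y : X₁ × X₂} (hx : x ∈ correct f₁ f₂ g) (hy : y ∈ correct f₁ f₂ g)
    (h₁ : f₁ x.1 = f₁ y.1) (h₂ : f₂ x.2 = f₂ y.2) : x = y := by
  simp only [correct, mem_filter, mem_univ, true_and] at hx hy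
  rw [← hx, ← hy, h₁, h₂]

variable {φ : X₁ × X₂ → ℝ} {B : ℝ}

theorem sum_correct_le_fst [Fintype A₁] (hφ : ∀ x, φ x ≤ B) (hB : 0 ≤ B) :
    ∑ x ∈ correct f₁ f₂ g, φ x ≤ Fintype.card A₁ * Fintype.card X₂ * B := by
  rw [← sum_fiberwise _ Prod.snd]
  calc ∑ x₂, ∑ x ∈ correct f₁ f₂ g with x.2 = x₂, φ x
      ≤ ∑ _x₂ : X₂, Fintype.card A₁ * B := by
        refine sum_le_sum fun x₂ _ => sum_le_card_mul_of_injOn (f := fun x => f₁ x.1)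
          (fun x hx y hy h => ?_) (fun x _ => hφ x) hB
        simp only [coe_filter] at hx hy
        exact eq_of_mem_correct hx.1 hy.1 h (by rw [hx.2, hy.2])
    _ = _ := by simp [mul_comm, mul_left_comm]

theorem sum_correct_le_snd [Fintype A₂] (hφ : ∀ x, φ x ≤ B) (hB : 0 ≤ B) :
    ∑ x ∈ correct f₁ f₂ g, φ x ≤ Fintype.card A₂ * Fintype.card X₁ * B := by
  rw [← sum_fiberwise _ Prod.fst]
  calc ∑ x₁, ∑ x ∈ correct f₁ f₂ g with x.1 = x₁, φ x
      ≤ ∑ _x₁ : X₁, Fintype.card A₂ * B := by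
        refine sum_le_sum fun x₁ _ => sum_le_card_mul_of_injOn (f := fun x => f₂ x.2)
          (fun x hx y hy h => ?_) (fun x _ => hφ x) hB
        simp only [coe_filter] at hx hy
        exact eq_of_mem_correct hx.1 hy.1 (by rw [hx.2, hy.2]) h
    _ = _ := by simp [mul_comm, mul_left_comm]

theorem sum_correct_le_prod [Fintype A₁] [Fintype A₂] (hφ : ∀ x, φ x ≤ B) (hB : 0 ≤ B) :
    ∑ x ∈ correct f₁ f₂ g, φ x ≤ Fintype.card A₁ * Fintype.card A₂ * B := by
  refine (sum_le_card_mul_of_injOn (s := correct f₁ f₂ g) (f := fun x => (f₁ x.1, f₂ x.2))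
    (fun x hx y hy h => eq_of_mem_correct hx hy (congrArg Prod.fst h) (congrArg Prod.snd h))
    (fun x _ => hφ x) hB).trans_eq ?_
  rw [Fintype.card_prod, Nat.cast_mul]

theorem sum_sub_sum_correct_le_error {P : X₁ → X₂ → ℝ} (hφ : ∀ x, φ x ≤ P x.1 x.2) :
    ∑ x, φ x - ∑ x ∈ correct f₁ f₂ g, φ x ≤ error f₁ f₂ g P := by
  rw [error, ← Fintype.sum_prod_type', ← sum_filter_add_sum_filter_not univ (· ∈ correct f₁ f₂ g) φ,
    filter_mem_eq_inter, univ_inter, add_sub_cancel_left]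
  simp only [mul_ite, mul_one, mul_zero, ← sum_filter]
  exact (sum_le_sum fun x _ => hφ x).trans_eq (sum_congr (by ext; simp [correct]) fun _ _ => rfl)

theorem metaconverse [Fintype A₁] [Fintype A₂] {P : X₁ → X₂ → ℝ} (hP : ∀ x₁ x₂, 0 ≤ P x₁ x₂)
    {c₁ c₂ c₃ B₁ B₂ B₃ : ℝ} (hc₁ : 0 ≤ c₁) (hc₂ : 0 ≤ c₂) (hc₃ : 0 ≤ c₃)
    (hB₁ : ∀ x₁ x₂, min (P x₁ x₂) c₁ ≤ B₁) (hB₂ : ∀ x₁ x₂, min (P x₁ x₂) c₂ ≤ B₂)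
    (hB₃ : ∀ x₁ x₂, min (P x₁ x₂) c₃ ≤ B₃) (hB₁0 : 0 ≤ B₁) (hB₂0 : 0 ≤ B₂) (hB₃0 : 0 ≤ B₃) :
    ∑ x₁, ∑ x₂, min (P x₁ x₂) (c₁ + c₂ + c₃) - Fintype.card A₁ * Fintype.card X₂ * B₁ -
        Fintype.card A₂ * Fintype.card X₁ * B₂ - Fintype.card A₁ * Fintype.card A₂ * B₃ ≤
      error f₁ f₂ g P := by
  have h_split : ∑ x ∈ correct f₁ f₂ g, min (P x.1 x.2) (c₁ + c₂ + c₃) ≤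
      ∑ x ∈ correct f₁ f₂ g, min (P x.1 x.2) c₁ + ∑ x ∈ correct f₁ f₂ g, min (P x.1 x.2) c₂ +
        ∑ x ∈ correct f₁ f₂ g, min (P x.1 x.2) c₃ := by
    simp only [← sum_add_distrib]
    refine sum_le_sum fun x _ => ?_
    have hPx := hP x.1 x.2
    calc min (P x.1 x.2) (c₁ + c₂ + c₃)
        ≤ min (P x.1 x.2) (c₁ + c₂) + min (P x.1 x.2) c₃ :=
          min_add_le_min_add_min hPx (add_nonneg hc₁ hc₂) hc₃
      _ ≤ _ := by gcongr; exact min_add_le_min_add_min hPx hc₁ hc₂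
  have h_err := sum_sub_sum_correct_le_error (f₁ := f₁) (f₂ := f₂) (g := g)
    (φ := fun x => min (P x.1 x.2) (c₁ + c₂ + c₃)) (fun x => min_le_left _ _)
  rw [← Fintype.sum_prod_type' (fun x₁ x₂ => min (P x₁ x₂) (c₁ + c₂ + c₃))]
  linarith [sum_correct_le_fst (f₁ := f₁) (f₂ := f₂) (g := g) (fun x => hB₁ x.1 x.2) hB₁0,
    sum_correct_le_snd (f₁ := f₁) (f₂ := f₂) (g := g) (fun x => hB₂ x.1 x.2) hB₂0,
    sum_correct_le_prod (f₁ := f₁) (f₂ := f₂) (g := g) (fun x => hB₃ x.1 x.2) hB₃0]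

end SlepianWolf

theorem sum_sum_min_hammingDist_div_two_pow (n : ℕ) (w : ℕ → ℝ) (c : ℝ) :
    ∑ x : Fin n → Fin 2, ∑ y, min (w (hammingDist x y) / 2 ^ n) c =
      ∑ k ∈ range (n + 1), n.choose k * min (w k) (2 ^ n * c) := by
  rw [sum_congr rfl fun x _ => sum_hammingDist_eq_sum_choose x fun k => min (w k / 2 ^ n) c]
  simp only [Fintype.card_fin, sum_const, card_univ, Fintype.card_pi, prod_const, nsmul_eq_mul,
    mul_sum]
  refine sum_congr rfl fun k _ => ?_
  rw [mul_left_comm, Nat.cast_pow, Nat.cast_ofNat, mul_min_of_nonneg _ _ (by positivity),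
    mul_div_cancel₀ _ (by positivity)]

theorem dsbs_slepian_wolf_metaconverse_general
    (n : ℕ) (p : ℝ) (hp0 : 0 < p) (hp : p < 1/2)
    (M₁ M₂ : ℕ)
    (β : ℝ)
    (P : (Fin n → Fin 2) → (Fin n → Fin 2) → ℝ)
    (hPdef : ∀ s₁ s₂, P s₁ s₂ =
      (2:ℝ)⁻¹ ^ n * p ^ (hammingDist s₁ s₂) * (1 - p) ^ (n - hammingDist s₁ s₂))
    (f₁ : (Fin n → Fin 2) → Fin M₁) (f₂ : (Fin n → Fin 2) → Fin M₂)
    (g : Fin M₁ → Fin M₂ → (Fin n → Fin 2) × (Fin n → Fin 2)) :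
    ∑ s₁, ∑ s₂, P s₁ s₂ * (if g (f₁ s₁) (f₂ s₂) ≠ (s₁, s₂) then (1:ℝ) else 0) ≥
      (∑ k ∈ Finset.range (n + 1), (n.choose k : ℝ) *
        min (p ^ k * (1 - p) ^ (n - k))
          ((2:ℝ) ^ (-β) / M₁ + (2:ℝ) ^ (-β) / M₂ +
            (2:ℝ) ^ ((n:ℝ) - β) / (M₁ * M₂))) -
      M₁ * (2:ℝ) ^ n * ((Finset.range (n + 1)).sup' (Finset.nonempty_range_add_one)
        (fun k => min (p ^ k * (1 - p) ^ (n - k) / (2:ℝ) ^ n)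
          ((2:ℝ) ^ (-β) / ((2:ℝ) ^ n * M₁)))) -
      M₂ * (2:ℝ) ^ n * ((Finset.range (n + 1)).sup' (Finset.nonempty_range_add_one)
        (fun k => min (p ^ k * (1 - p) ^ (n - k) / (2:ℝ) ^ n)
          ((2:ℝ) ^ (-β) / ((2:ℝ) ^ n * M₂)))) -
      M₁ * M₂ * ((Finset.range (n + 1)).sup' (Finset.nonempty_range_add_one)
        (fun k => min (p ^ k * (1 - p) ^ (n - k) / (2:ℝ) ^ n)
          ((2:ℝ) ^ (-β) / (M₁ * M₂)))) := by
  set w : ℕ → ℝ := fun k => p ^ k * (1 - p) ^ (n - k)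
  set B : ℝ → ℝ := fun c =>
    (range (n + 1)).sup' nonempty_range_add_one fun k => min (w k / 2 ^ n) c
  have hq : 0 ≤ 1 - p := by linarith
  have hw : ∀ k, 0 ≤ w k := fun k => by positivity
  have hP : ∀ s₁ s₂, P s₁ s₂ = w (hammingDist s₁ s₂) / 2 ^ n := fun s₁ s₂ => by
    rw [hPdef, inv_pow]; ring
  have hP0 : ∀ s₁ s₂, 0 ≤ P s₁ s₂ := fun s₁ s₂ => hP s₁ s₂ ▸ div_nonneg (hw _) (by positivity)
  have hB : ∀ c s₁ s₂, min (P s₁ s₂) c ≤ B c := fun c s₁ s₂ => hP s₁ s₂ ▸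
    le_sup' (fun k => min (w k / 2 ^ n) c)
      (mem_range_succ_iff.2 (hammingDist_le_card_fintype.trans_eq (Fintype.card_fin n)))
  have hB0 : ∀ c, 0 ≤ c → 0 ≤ B c := fun c hc =>
    (le_min (div_nonneg (hw 0) (by positivity)) hc).trans
      (le_sup' (fun k => min (w k / 2 ^ n) c) (mem_range_succ_iff.2 (Nat.zero_le n)))
  set c₁ : ℝ := 2 ^ (-β) / (2 ^ n * M₁)
  set c₂ : ℝ := 2 ^ (-β) / (2 ^ n * M₂)
  set c₃ : ℝ := 2 ^ (-β) / (M₁ * M₂)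
  have h_sum : ∑ s₁, ∑ s₂, min (P s₁ s₂) (c₁ + c₂ + c₃) = ∑ k ∈ range (n + 1), n.choose k *
      min (w k) (2 ^ (-β) / M₁ + 2 ^ (-β) / M₂ + 2 ^ ((n:ℝ) - β) / (M₁ * M₂)) := by
    simp only [hP, sum_sum_min_hammingDist_div_two_pow, c₁, c₂, c₃, sub_eq_add_neg,
      Real.rpow_add two_pos, Real.rpow_natCast]
    field_simp
  have key := SlepianWolf.metaconverse (f₁ := f₁) (f₂ := f₂) (g := g) hP0
    (c₁ := c₁) (c₂ := c₂) (c₃ := c₃) (by positivity) (by positivity) (by positivity)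
    (hB _) (hB _) (hB _) (hB0 _ (by positivity)) (hB0 _ (by positivity)) (hB0 _ (by positivity))
  rw [h_sum] at key
  simp only [Fintype.card_fin, Fintype.card_pi, prod_const, card_univ, Nat.cast_pow,
    Nat.cast_ofNat] at key
  exact key

theorem dsbs_slepian_wolf_metaconverse
    (n : ℕ) (hn : 1 ≤ n) (p : ℝ) (hp0 : 0 < p) (hp : p < 1/2)
    (M₁ M₂ : ℕ) (hM₁ : 0 < M₁) (hM₂ : 0 < M₂)
    (β : ℝ) (hβ : 0 < β)
    (P : (Fin n → Fin 2) → (Fin n → Fin 2) → ℝ)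
    (hPdef : ∀ s₁ s₂, P s₁ s₂ =
      (2:ℝ)⁻¹ ^ n * p ^ (hammingDist s₁ s₂) * (1 - p) ^ (n - hammingDist s₁ s₂))
    (f₁ : (Fin n → Fin 2) → Fin M₁) (f₂ : (Fin n → Fin 2) → Fin M₂)
    (g : Fin M₁ → Fin M₂ → (Fin n → Fin 2) × (Fin n → Fin 2)) :
    ∑ s₁, ∑ s₂, P s₁ s₂ * (if g (f₁ s₁) (f₂ s₂) ≠ (s₁, s₂) then (1:ℝ) else 0) ≥
      (∑ k ∈ Finset.range (n + 1), (n.choose k : ℝ) *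
        min (p ^ k * (1 - p) ^ (n - k))
          ((2:ℝ) ^ (-β) / M₁ + (2:ℝ) ^ (-β) / M₂ +
            (2:ℝ) ^ ((n:ℝ) - β) / (M₁ * M₂))) -
      M₁ * (2:ℝ) ^ n * ((Finset.range (n + 1)).sup' (Finset.nonempty_range_add_one)
        (fun k => min (p ^ k * (1 - p) ^ (n - k) / (2:ℝ) ^ n)
          ((2:ℝ) ^ (-β) / ((2:ℝ) ^ n * M₁)))) -
      M₂ * (2:ℝ) ^ n * ((Finset.range (n + 1)).sup' (Finset.nonempty_range_add_one)
        (fun k => min (p ^ k * (1 - p) ^ (n - k) / (2:ℝ) ^ n)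
          ((2:ℝ) ^ (-β) / ((2:ℝ) ^ n * M₂)))) -
      M₁ * M₂ * ((Finset.range (n + 1)).sup' (Finset.nonempty_range_add_one)
        (fun k => min (p ^ k * (1 - p) ^ (n - k) / (2:ℝ) ^ n)
          ((2:ℝ) ^ (-β) / (M₁ * M₂)))) :=
  dsbs_slepian_wolf_metaconverse_general n p hp0 hp M₁ M₂ β P hPdef f₁ f₂ g
end
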